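/- arXiv:2310.18518 — 4 statements merged into one kernel-verified Lean document; each statement's English description precedes it below -/
import Mathlib

section
/- For every positive integer k there exist two non-crossing spanning trees T_k and T_k' on a set of 2k+2 points in convex position with δ(T_k,T_k') = k such that every non-crossing flip sequence between T_k and T_k' has length at least 2k. -/
open Finset

noncomputable section
attribute [local instance] Classical.propDecidable

/-- The successor of `i` in the cyclic order on `Fin n`. -/
def nextIdx {n : ℕ} (i : Fin n) : Fin n := ⟨(i.val + 1) % n, Nat.mod_lt _ i.pos⟩

/-- `x` lies strictly between `a` and `b` in the cyclic order on `Fin n`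
(going forwards from `a` to `b`). -/
def CBtw {n : ℕ} (a x b : Fin n) : Prop :=
  0 < (x - a).val ∧ (x - a).val < (b - a).val

/-- Endpoints `a,b` and `c,d` interleave in the cyclic order:
exactly one of `c`, `d` lies strictly between `a` and `b`. -/
def CrossPair {n : ℕ} (a b c d : Fin n) : Prop :=
  Xor' (CBtw a c b) (CBtw a d b)

/-- Two chords of the convex polygon on `n` points (labeled in cyclic order)
cross in their interiors; combinatorially their endpoints interleave. -/
def Crosses {n : ℕ} (e f : Sym2 (Fin n)) : Prop :=
  ∃ a b c d : Fin n, e = s(a, b) ∧ f = s(c, d) ∧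
    a ≠ b ∧ a ≠ c ∧ a ≠ d ∧ b ≠ c ∧ b ≠ d ∧ c ≠ d ∧ CrossPair a b c d

/-- A border edge joins two consecutive points of the convex hull. -/
def IsBorderEdge {n : ℕ} (e : Sym2 (Fin n)) : Prop :=
  ∃ i : Fin n, e = s(i, nextIdx i)

/-- `T` is a non-crossing spanning tree on the `n` points (in convex position,
labeled cyclically by `Fin n`): loopless, `n - 1` edges, connected, and no two
edges cross. -/
def IsNCST (n : ℕ) (T : Finset (Sym2 (Fin n))) : Prop :=
  (∀ e ∈ T, ¬ e.IsDiag) ∧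
  T.card = n - 1 ∧
  (SimpleGraph.fromEdgeSet (↑T : Set (Sym2 (Fin n)))).Connected ∧
  ∀ e ∈ T, ∀ f ∈ T, ¬ Crosses e f

/-- One flip: exactly one edge is removed and one edge is added. -/
def FlipStep {n : ℕ} (T T' : Finset (Sym2 (Fin n))) : Prop :=
  (T \ T').card = 1 ∧ (T' \ T).card = 1

/-- A flip sequence: consecutive non-crossing spanning trees differing by one flip. -/
def IsFlipSeq (n : ℕ) (L : List (Finset (Sym2 (Fin n)))) : Prop :=
  (∀ T ∈ L, IsNCST n T) ∧ L.Chain' FlipStep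

/-- There is a flip sequence of length `ℓ` from `T₁` to `T₂`. -/
def HasFlipSeq (n : ℕ) (T₁ T₂ : Finset (Sym2 (Fin n))) (ℓ : ℕ) : Prop :=
  ∃ L : List (Finset (Sym2 (Fin n))), IsFlipSeq n L ∧ L.length = ℓ + 1 ∧
    L.head? = some T₁ ∧ L.getLast? = some T₂

/-- The side of the chord from `a` to `b`: the two endpoints together with all
points strictly between them in the cyclic order. -/
def sideOf {n : ℕ} (a b : Fin n) : Finset (Fin n) :=
  Finset.univ.filter (fun x => x = a ∨ x = b ∨ CBtw a x b)

/-- Holes of `T` (pairs of consecutive points not joined by an edge of `T`)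
with both endpoints in `A`, indexed by their first point. -/
def holesIn (n : ℕ) (T : Finset (Sym2 (Fin n))) (A : Finset (Fin n)) : Finset (Fin n) :=
  Finset.univ.filter (fun i => s(i, nextIdx i) ∉ T ∧ i ∈ A ∧ nextIdx i ∈ A)

/-- Degree of the side `sideOf a b` in `T'`: the number of endpoints (counted
with multiplicity over the chords of `T'`) lying inside the side. An endpoint
`v` of a chord `vw` is inside the side if `v` belongs to it and either `v` is
not an endpoint of the defining chord `ab` or both `v, w` are in the side. -/
def sideDegree (n : ℕ) (a b : Fin n) (T' : Finset (Sym2 (Fin n))) : ℕ :=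
  ((Finset.univ : Finset (Fin n × Fin n)).filter
    (fun p => s(p.1, p.2) ∈ T' ∧ ¬ IsBorderEdge s(p.1, p.2) ∧
      p.1 ∈ sideOf a b ∧ ((p.1 ≠ a ∧ p.1 ≠ b) ∨ p.2 ∈ sideOf a b))).card

/-- A nice pair of trees: the same border edges, and no common chord. -/
def NicePair (n : ℕ) (T₁ T₂ : Finset (Sym2 (Fin n))) : Prop :=
  IsNCST n T₁ ∧ IsNCST n T₂ ∧
  (∀ e, IsBorderEdge e → (e ∈ T₁ ↔ e ∈ T₂)) ∧
  (∀ e ∈ T₁, e ∈ T₂ → IsBorderEdge e)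

/-- A non-crossing flip: the added edge creates no crossing with the tree
before the removal (in particular it does not cross the deleted edge). -/
def NCFlipStep {n : ℕ} (T T' : Finset (Sym2 (Fin n))) : Prop :=
  FlipStep T T' ∧ ∀ e ∈ T ∪ T', ∀ f ∈ T ∪ T', ¬ Crosses e f

/-- There is a non-crossing flip sequence of length `ℓ` from `T₁` to `T₂`. -/
def HasNCFlipSeq (n : ℕ) (T₁ T₂ : Finset (Sym2 (Fin n))) (ℓ : ℕ) : Prop :=
  ∃ L : List (Finset (Sym2 (Fin n))),
    (∀ T ∈ L, IsNCST n T) ∧ L.Chain' NCFlipStep ∧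
    L.length = ℓ + 1 ∧ L.head? = some T₁ ∧ L.getLast? = some T₂

lemma sub_val' {n : ℕ} (x a : Fin n) :
    (x - a).val = if a.val ≤ x.val then x.val - a.val else x.val + n - a.val := by
  have hx := x.isLt; have ha := a.isLt
  rw [Fin.sub_def]
  simp only []
  split
  · have h : n - a.val + x.val = n + (x.val - a.val) := by omega
    rw [h, Nat.add_mod_left, Nat.mod_eq_of_lt (by omega)]
  · rw [Nat.mod_eq_of_lt (by omega)]
    omega

def btwN (a x b : ℕ) : Prop := (a < x ∧ x < b) ∨ (x < b ∧ b < a) ∨ (b < a ∧ a < x)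

lemma cbtw_iff {n : ℕ} (a x b : Fin n) : CBtw a x b ↔ btwN a.val x.val b.val := by
  have hx := x.isLt; have ha := a.isLt; have hb := b.isLt
  unfold CBtw btwN
  rw [sub_val', sub_val']
  split_ifs <;> omega

lemma crosses_shared {n : ℕ} {e f : Sym2 (Fin n)} {x : Fin n}
    (hx : x ∈ e) (hxf : x ∈ f) : ¬ Crosses e f := by
  rintro ⟨a, b, c, d, he, hf, h1, h2, h3, h4, h5, h6, -⟩
  subst he hf
  rw [Sym2.mem_iff] at hx hxf
  rcases hx with rfl | rfl <;> rcases hxf with rfl | rfl <;> simp_all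

set_option maxHeartbeats 2000000 in
lemma crosses_iff {n : ℕ} {a b c d : Fin n}
    (h1 : a ≠ b) (h2 : c ≠ d) (h3 : a ≠ c) (h4 : a ≠ d) (h5 : b ≠ c) (h6 : b ≠ d) :
    Crosses s(a, b) s(c, d) ↔ Xor' (btwN a.val c.val b.val) (btwN a.val d.val b.val) := by
  have hne : ∀ (u v : Fin n), u ≠ v → u.val ≠ v.val := fun u v h hh => h (Fin.ext hh)
  have e1 := hne _ _ h1; have e2 := hne _ _ h2; have e3 := hne _ _ h3
  have e4 := hne _ _ h4; have e5 := hne _ _ h5; have e6 := hne _ _ h6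
  constructor
  · rintro ⟨a', b', c', d', he, hf, -, -, -, -, -, -, hcp⟩
    rw [Sym2.eq_iff] at he hf
    unfold CrossPair at hcp
    rw [cbtw_iff, cbtw_iff] at hcp
    unfold btwN Xor' Xor at hcp ⊢
    rcases he with ⟨rfl, rfl⟩ | ⟨rfl, rfl⟩ <;> rcases hf with ⟨rfl, rfl⟩ | ⟨rfl, rfl⟩ <;> omega
  · intro h
    refine ⟨a, b, c, d, rfl, rfl, h1, h3, h4, h5, h6, h2, ?_⟩
    unfold CrossPair
    rw [cbtw_iff, cbtw_iff]
    exact h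

/-! ### construction -/

def vof (k x : ℕ) : Fin (2*k+2) := ⟨x % (2*k+2), Nat.mod_lt _ (by omega)⟩

lemma vof_val {k x : ℕ} (h : x < 2*k+2) : (vof k x).val = x := Nat.mod_eq_of_lt h

def rungE (k m : ℕ) : Sym2 (Fin (2*k+2)) := s(vof k m, vof k (2*k+1-m))
def eE (k j : ℕ) : Sym2 (Fin (2*k+2)) := s(vof k j, vof k (2*k-j))
def fE (k j : ℕ) : Sym2 (Fin (2*k+2)) := s(vof k (j+1), vof k (2*k+1-j))

def TT (k : ℕ) : Finset (Sym2 (Fin (2*k+2))) :=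
  (range (k+1)).image (rungE k) ∪ (range k).image (eE k)
def TT' (k : ℕ) : Finset (Sym2 (Fin (2*k+2))) :=
  (range (k+1)).image (rungE k) ∪ (range k).image (fE k)

lemma sym2_vof_eq {k x y u v : ℕ} (hx : x < 2*k+2) (hy : y < 2*k+2)
    (hu : u < 2*k+2) (hv : v < 2*k+2) :
    s(vof k x, vof k y) = s(vof k u, vof k v) ↔ ((x = u ∧ y = v) ∨ (x = v ∧ y = u)) := by
  rw [Sym2.eq_iff]
  simp only [Fin.ext_iff, vof_val hx, vof_val hy, vof_val hu, vof_val hv]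

lemma mem_TT {k : ℕ} {e : Sym2 (Fin (2*k+2))} :
    e ∈ TT k ↔ (∃ m, m ≤ k ∧ e = rungE k m) ∨ (∃ j, j < k ∧ e = eE k j) := by
  simp only [TT, mem_union, mem_image, mem_range, Nat.lt_succ_iff]
  constructor
  · rintro (⟨m, hm, rfl⟩ | ⟨j, hj, rfl⟩)
    · exact Or.inl ⟨m, hm, rfl⟩
    · exact Or.inr ⟨j, hj, rfl⟩
  · rintro (⟨m, hm, rfl⟩ | ⟨j, hj, rfl⟩)
    · exact Or.inl ⟨m, hm, rfl⟩
    · exact Or.inr ⟨j, hj, rfl⟩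

lemma mem_TT' {k : ℕ} {e : Sym2 (Fin (2*k+2))} :
    e ∈ TT' k ↔ (∃ m, m ≤ k ∧ e = rungE k m) ∨ (∃ j, j < k ∧ e = fE k j) := by
  simp only [TT', mem_union, mem_image, mem_range, Nat.lt_succ_iff]
  constructor
  · rintro (⟨m, hm, rfl⟩ | ⟨j, hj, rfl⟩)
    · exact Or.inl ⟨m, hm, rfl⟩
    · exact Or.inr ⟨j, hj, rfl⟩
  · rintro (⟨m, hm, rfl⟩ | ⟨j, hj, rfl⟩)
    · exact Or.inl ⟨m, hm, rfl⟩
    · exact Or.inr ⟨j, hj, rfl⟩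

/-! ### cuts -/

def rho (k : ℕ) (v : Fin (2*k+2)) : ℕ := min v.val (2*k+1 - v.val)

def CutX (k j : ℕ) (e : Sym2 (Fin (2*k+2))) : Prop :=
  ∃ u v : Fin (2*k+2), e = s(u, v) ∧ rho k u ≤ j ∧ j < rho k v

lemma rho_vof {k x : ℕ} (h : x < 2*k+2) : rho k (vof k x) = min x (2*k+1-x) := by
  unfold rho; rw [vof_val h]

lemma cutX_elim {k j : ℕ} {u v : Fin (2*k+2)} (h : CutX k j s(u, v)) :
    (rho k u ≤ j ∧ j < rho k v) ∨ (rho k v ≤ j ∧ j < rho k u) := by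
  obtain ⟨u', v', he, h1, h2⟩ := h
  rw [Sym2.eq_iff] at he
  rcases he with ⟨rfl, rfl⟩ | ⟨rfl, rfl⟩
  · exact Or.inl ⟨h1, h2⟩
  · exact Or.inr ⟨h1, h2⟩

lemma crosses_vof_char {k x y u v : ℕ} (hx : x < 2*k+2) (hy : y < 2*k+2)
    (hu : u < 2*k+2) (hv : v < 2*k+2) (hxy : x ≠ y) (huv : u ≠ v) :
    Crosses s(vof k x, vof k y) s(vof k u, vof k v) ↔
      ((x ≠ u ∧ x ≠ v ∧ y ≠ u ∧ y ≠ v) ∧ Xor' (btwN x u y) (btwN x v y)) := by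
  have hfe : ∀ (a b : ℕ), a < 2*k+2 → b < 2*k+2 → (vof k a ≠ vof k b ↔ a ≠ b) := by
    intro a b ha hb
    constructor
    · intro h hab; exact h (by subst hab; rfl)
    · intro h hh; exact h (by simpa [Fin.ext_iff, vof_val ha, vof_val hb] using hh)
  by_cases hd : x ≠ u ∧ x ≠ v ∧ y ≠ u ∧ y ≠ v
  · obtain ⟨d1, d2, d3, d4⟩ := hd
    rw [crosses_iff ((hfe _ _ hx hy).2 hxy) ((hfe _ _ hu hv).2 huv) ((hfe _ _ hx hu).2 d1)
      ((hfe _ _ hx hv).2 d2) ((hfe _ _ hy hu).2 d3) ((hfe _ _ hy hv).2 d4)]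
    rw [vof_val hx, vof_val hy, vof_val hu, vof_val hv]
    exact ⟨fun h => ⟨⟨d1, d2, d3, d4⟩, h⟩, fun h => h.2⟩
  · constructor
    · intro hc
      exfalso
      push_neg at hd
      have hsh : ∃ w : Fin (2*k+2), w ∈ s(vof k x, vof k y) ∧ w ∈ s(vof k u, vof k v) := by
        by_cases h1 : x = u
        · exact ⟨vof k x, by simp, by rw [h1]; simp⟩
        by_cases h2 : x = v
        · exact ⟨vof k x, by simp, by rw [h2]; simp⟩
        by_cases h3 : y = u
        · exact ⟨vof k y, by simp, by rw [h3]; simp⟩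
        · exact ⟨vof k y, by simp, by rw [hd h1 h2 h3]; simp⟩
      obtain ⟨w, hw1, hw2⟩ := hsh
      exact crosses_shared hw1 hw2 hc
    · rintro ⟨hdd, -⟩; exact absurd hdd hd

lemma TT_noncross {k : ℕ} : ∀ e ∈ TT k, ∀ f ∈ TT k, ¬ Crosses e f := by
  intro e he f hf
  rw [mem_TT] at he hf
  rcases he with ⟨m, hm, rfl⟩ | ⟨j, hj, rfl⟩ <;>
    rcases hf with ⟨m', hm', rfl⟩ | ⟨j', hj', rfl⟩ <;>
      simp only [rungE, eE] <;>
        rw [crosses_vof_char (by omega) (by omega) (by omega) (by omega) (by omega) (by omega)] <;>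
          · simp only [Xor', Xor, btwN]
            omega

lemma TT'_noncross {k : ℕ} : ∀ e ∈ TT' k, ∀ f ∈ TT' k, ¬ Crosses e f := by
  intro e he f hf
  rw [mem_TT'] at he hf
  rcases he with ⟨m, hm, rfl⟩ | ⟨j, hj, rfl⟩ <;>
    rcases hf with ⟨m', hm', rfl⟩ | ⟨j', hj', rfl⟩ <;>
      simp only [rungE, fE] <;>
        rw [crosses_vof_char (by omega) (by omega) (by omega) (by omega) (by omega) (by omega)] <;>
          · simp only [Xor', Xor, btwN]
            omega

lemma vof_ne {k x y : ℕ} (hx : x < 2*k+2) (hy : y < 2*k+2) (h : x ≠ y) :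
    vof k x ≠ vof k y := by
  intro hh
  exact h (by simpa [Fin.ext_iff, vof_val hx, vof_val hy] using hh)

lemma TT_loopless {k : ℕ} : ∀ e ∈ TT k, ¬ e.IsDiag := by
  intro e he
  rcases mem_TT.mp he with ⟨m, hm, rfl⟩ | ⟨j, hj, rfl⟩ <;>
    simp only [rungE, eE, Sym2.isDiag_iff_proj_eq] <;>
      exact fun h => vof_ne (by omega) (by omega) (by omega) h

lemma TT'_loopless {k : ℕ} : ∀ e ∈ TT' k, ¬ e.IsDiag := by
  intro e he
  rcases mem_TT'.mp he with ⟨m, hm, rfl⟩ | ⟨j, hj, rfl⟩ <;>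
    simp only [rungE, fE, Sym2.isDiag_iff_proj_eq] <;>
      exact fun h => vof_ne (by omega) (by omega) (by omega) h

lemma rung_card {k : ℕ} : ((range (k+1)).image (rungE k)).card = k + 1 := by
  rw [Finset.card_image_of_injOn, card_range]
  intro m hm m' hm' h
  rw [mem_coe, mem_range] at hm hm'
  simp only [rungE] at h
  rw [sym2_vof_eq (by omega) (by omega) (by omega) (by omega)] at h
  omega

lemma TT_card {k : ℕ} : (TT k).card = 2*k+1 := by
  have hd : Disjoint ((range (k+1)).image (rungE k)) ((range k).image (eE k)) := by
    rw [Finset.disjoint_left]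
    rintro e he1 he2
    obtain ⟨m, hm, rfl⟩ := Finset.mem_image.mp he1
    obtain ⟨j, hj, hje⟩ := Finset.mem_image.mp he2
    rw [mem_range] at hm hj
    simp only [rungE, eE] at hje
    rw [sym2_vof_eq (by omega) (by omega) (by omega) (by omega)] at hje
    omega
  rw [TT, Finset.card_union_of_disjoint hd, rung_card]
  rw [Finset.card_image_of_injOn, card_range]
  · omega
  · intro m hm m' hm' h
    rw [mem_coe, mem_range] at hm hm'
    simp only [eE] at h
    rw [sym2_vof_eq (by omega) (by omega) (by omega) (by omega)] at h
    omega

lemma TT'_card {k : ℕ} : (TT' k).card = 2*k+1 := by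
  have hd : Disjoint ((range (k+1)).image (rungE k)) ((range k).image (fE k)) := by
    rw [Finset.disjoint_left]
    rintro e he1 he2
    obtain ⟨m, hm, rfl⟩ := Finset.mem_image.mp he1
    obtain ⟨j, hj, hje⟩ := Finset.mem_image.mp he2
    rw [mem_range] at hm hj
    simp only [rungE, fE] at hje
    rw [sym2_vof_eq (by omega) (by omega) (by omega) (by omega)] at hje
    omega
  rw [TT', Finset.card_union_of_disjoint hd, rung_card]
  rw [Finset.card_image_of_injOn, card_range]
  · omega
  · intro m hm m' hm' h
    rw [mem_coe, mem_range] at hm hm'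
    simp only [fE] at h
    rw [sym2_vof_eq (by omega) (by omega) (by omega) (by omega)] at h
    omega

lemma sdiff_card {k : ℕ} : (TT k \ TT' k).card = k := by
  have hset : TT k \ TT' k = (range k).image (eE k) := by
    ext e
    rw [Finset.mem_sdiff]
    constructor
    · rintro ⟨h1, h2⟩
      rcases mem_TT.mp h1 with ⟨m, hm, rfl⟩ | ⟨j, hj, rfl⟩
      · exact absurd (mem_TT'.mpr (Or.inl ⟨m, hm, rfl⟩)) h2
      · exact Finset.mem_image.mpr ⟨j, mem_range.mpr hj, rfl⟩
    · intro he
      obtain ⟨j, hj, rfl⟩ := Finset.mem_image.mp he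
      rw [mem_range] at hj
      refine ⟨mem_TT.mpr (Or.inr ⟨j, hj, rfl⟩), fun hc => ?_⟩
      rcases mem_TT'.mp hc with ⟨m, hm, hme⟩ | ⟨j', hj', hje⟩
      · simp only [rungE, eE] at hme
        rw [sym2_vof_eq (by omega) (by omega) (by omega) (by omega)] at hme
        omega
      · simp only [fE, eE] at hje
        rw [sym2_vof_eq (by omega) (by omega) (by omega) (by omega)] at hje
        omega
  rw [hset, Finset.card_image_of_injOn, card_range]
  intro m hm m' hm' h
  rw [mem_coe, mem_range] at hm hm'
  simp only [eE] at h
  rw [sym2_vof_eq (by omega) (by omega) (by omega) (by omega)] at h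
  omega

lemma TT_conn {k : ℕ} :
    (SimpleGraph.fromEdgeSet ((TT k : Set (Sym2 (Fin (2*k+2)))))).Connected := by
  set G := SimpleGraph.fromEdgeSet ((TT k : Set (Sym2 (Fin (2*k+2))))) with hG
  have adjRung : ∀ m, m ≤ k → G.Adj (vof k m) (vof k (2*k+1-m)) := by
    intro m hm
    rw [hG, SimpleGraph.fromEdgeSet_adj]
    exact ⟨by rw [Finset.mem_coe]; exact mem_TT.mpr (Or.inl ⟨m, hm, rfl⟩),
      vof_ne (by omega) (by omega) (by omega)⟩
  have adjE : ∀ j, j < k → G.Adj (vof k j) (vof k (2*k-j)) := by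
    intro j hj
    rw [hG, SimpleGraph.fromEdgeSet_adj]
    exact ⟨by rw [Finset.mem_coe]; exact mem_TT.mpr (Or.inr ⟨j, hj, rfl⟩),
      vof_ne (by omega) (by omega) (by omega)⟩
  have key : ∀ m, m ≤ k →
      G.Reachable (vof k m) (vof k 0) ∧ G.Reachable (vof k (2*k+1-m)) (vof k 0) := by
    intro m
    induction m with
    | zero => exact fun _ => ⟨SimpleGraph.Reachable.refl _, ((adjRung 0 (by omega)).symm).reachable⟩
    | succ m ih =>
      intro h
      obtain ⟨r1, r2⟩ := ih (by omega)
      have hb : 2*k+1-(m+1) = 2*k-m := by omega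
      have rb : G.Reachable (vof k (2*k-m)) (vof k 0) :=
        ((adjE m (by omega)).symm.reachable).trans r1
      refine ⟨?_, by rw [hb]; exact rb⟩
      exact ((adjRung (m+1) h).reachable).trans (by rw [hb]; exact rb)
  have total : ∀ v : Fin (2*k+2), G.Reachable v (vof k 0) := by
    intro v
    have hv : v = vof k v.val := Fin.ext (by rw [vof_val v.isLt])
    by_cases h : v.val ≤ k
    · rw [hv]; exact (key v.val h).1
    · have h2 : 2*k+1-(2*k+1-v.val) = v.val := by have := v.isLt; omega
      have := (key (2*k+1-v.val) (by omega)).2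
      rw [h2] at this
      rw [hv]; exact this
  exact ⟨fun u v => (total u).trans (total v).symm⟩

lemma TT'_conn {k : ℕ} :
    (SimpleGraph.fromEdgeSet ((TT' k : Set (Sym2 (Fin (2*k+2)))))).Connected := by
  set G := SimpleGraph.fromEdgeSet ((TT' k : Set (Sym2 (Fin (2*k+2))))) with hG
  have adjRung : ∀ m, m ≤ k → G.Adj (vof k m) (vof k (2*k+1-m)) := by
    intro m hm
    rw [hG, SimpleGraph.fromEdgeSet_adj]
    exact ⟨by rw [Finset.mem_coe]; exact mem_TT'.mpr (Or.inl ⟨m, hm, rfl⟩),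
      vof_ne (by omega) (by omega) (by omega)⟩
  have adjF : ∀ j, j < k → G.Adj (vof k (j+1)) (vof k (2*k+1-j)) := by
    intro j hj
    rw [hG, SimpleGraph.fromEdgeSet_adj]
    exact ⟨by rw [Finset.mem_coe]; exact mem_TT'.mpr (Or.inr ⟨j, hj, rfl⟩),
      vof_ne (by omega) (by omega) (by omega)⟩
  have key : ∀ m, m ≤ k →
      G.Reachable (vof k m) (vof k 0) ∧ G.Reachable (vof k (2*k+1-m)) (vof k 0) := by
    intro m
    induction m with
    | zero => exact fun _ => ⟨SimpleGraph.Reachable.refl _, ((adjRung 0 (by omega)).symm).reachable⟩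
    | succ m ih =>
      intro h
      obtain ⟨r1, r2⟩ := ih (by omega)
      have ra : G.Reachable (vof k (m+1)) (vof k 0) :=
        ((adjF m (by omega)).reachable).trans r2
      refine ⟨ra, ?_⟩
      exact ((adjRung (m+1) h).symm.reachable).trans ra
  have total : ∀ v : Fin (2*k+2), G.Reachable v (vof k 0) := by
    intro v
    have hv : v = vof k v.val := Fin.ext (by rw [vof_val v.isLt])
    by_cases h : v.val ≤ k
    · rw [hv]; exact (key v.val h).1
    · have h2 : 2*k+1-(2*k+1-v.val) = v.val := by have := v.isLt; omega
      have := (key (2*k+1-v.val) (by omega)).2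
      rw [h2] at this
      rw [hv]; exact this
  exact ⟨fun u v => (total u).trans (total v).symm⟩

/-! ### potential -/

def nuP (k j : ℕ) (S : Finset (Sym2 (Fin (2*k+2)))) : Prop :=
  ∀ e ∈ S, CutX k j e → Crosses e (fE k j)

def phiG (k j : ℕ) (S : Finset (Sym2 (Fin (2*k+2)))) : ℕ :=
  (if fE k j ∈ S then 0 else 1) + (if nuP k j S then 1 else 0)

def Phi (k : ℕ) (S : Finset (Sym2 (Fin (2*k+2)))) : ℕ :=
  ∑ j ∈ range k, phiG k j S

lemma fE_not_mem_TT {k j : ℕ} (hj : j < k) : fE k j ∉ TT k := by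
  intro hc
  rcases mem_TT.mp hc with ⟨m, hm, hme⟩ | ⟨j', hj', hje⟩
  · simp only [rungE, fE] at hme
    rw [sym2_vof_eq (by omega) (by omega) (by omega) (by omega)] at hme
    omega
  · simp only [eE, fE] at hje
    rw [sym2_vof_eq (by omega) (by omega) (by omega) (by omega)] at hje
    omega

lemma eE_crosses_fE {k j : ℕ} (hj : j < k) : Crosses (eE k j) (fE k j) := by
  simp only [eE, fE]
  rw [crosses_vof_char (by omega) (by omega) (by omega) (by omega) (by omega) (by omega)]
  refine ⟨by omega, ?_⟩
  simp only [Xor', Xor, btwN]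
  omega

lemma Phi_TT {k : ℕ} : Phi k (TT k) = 2*k := by
  have h2 : ∀ j ∈ range k, phiG k j (TT k) = 2 := by
    intro j hj
    rw [mem_range] at hj
    have hnu : nuP k j (TT k) := by
      intro e he hcut
      rcases mem_TT.mp he with ⟨m, hm, rfl⟩ | ⟨m, hm, rfl⟩
      · exfalso
        have := cutX_elim hcut
        rw [rho_vof (by omega), rho_vof (by omega)] at this
        omega
      · have := cutX_elim hcut
        rw [rho_vof (by omega), rho_vof (by omega)] at this
        have hmj : m = j := by omega
        subst hmj
        exact eE_crosses_fE hj
    rw [phiG, if_neg (fE_not_mem_TT hj), if_pos hnu]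
  rw [Phi, Finset.sum_congr rfl h2, Finset.sum_const, card_range, smul_eq_mul]
  omega

lemma cutX_fE {k j : ℕ} (hj : j < k) : CutX k j (fE k j) := by
  refine ⟨vof k (2*k+1-j), vof k (j+1), ?_, ?_, ?_⟩
  · rw [fE, Sym2.eq_swap]
  · rw [rho_vof (by omega)]; omega
  · rw [rho_vof (by omega)]; omega

lemma fE_mem_TT' {k j : ℕ} (hj : j < k) : fE k j ∈ TT' k :=
  mem_TT'.mpr (Or.inr ⟨j, hj, rfl⟩)

lemma Phi_TT' {k : ℕ} : Phi k (TT' k) = 0 := by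
  rw [Phi]
  apply Finset.sum_eq_zero
  intro j hj
  rw [mem_range] at hj
  have hnu : ¬ nuP k j (TT' k) := by
    intro hc
    exact crosses_shared (Sym2.mem_mk_left _ _) (Sym2.mem_mk_left _ _)
      (hc (fE k j) (fE_mem_TT' hj) (cutX_fE hj))
  rw [phiG, if_pos (fE_mem_TT' hj), if_neg hnu]
  omega

lemma exists_cutX {k j : ℕ} (hj : j < k) {S : Finset (Sym2 (Fin (2*k+2)))}
    (hconn : (SimpleGraph.fromEdgeSet ((S : Set (Sym2 (Fin (2*k+2)))))).Connected) :
    ∃ h ∈ S, CutX k j h := by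
  set G := SimpleGraph.fromEdgeSet ((S : Set (Sym2 (Fin (2*k+2))))) with hG
  obtain ⟨W⟩ := hconn.preconnected (vof k j) (vof k (j+1))
  have aux : ∀ (v tgt : Fin (2*k+2)) (_ : G.Walk v tgt), rho k v ≤ j → j < rho k tgt →
      ∃ h ∈ S, CutX k j h := by
    intro v tgt W
    induction W with
    | nil =>
      intro hv htgt
      omega
    | @cons u v w hadj W ih =>
      intro hv htgt
      by_cases h2 : rho k v ≤ j
      · exact ih h2 htgt
      · obtain ⟨hmem, -⟩ := (SimpleGraph.fromEdgeSet_adj _).mp hadj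
        exact ⟨s(u, v), hmem, u, v, rfl, hv, by omega⟩
  exact aux _ _ W (by rw [rho_vof (by omega)]; omega) (by rw [rho_vof (by omega)]; omega)

def Safe (k j : ℕ) (g : Sym2 (Fin (2*k+2))) : Prop := CutX k j g ∧ ¬ Crosses g (fE k j)

lemma safe_cases {k j : ℕ} (hj : j < k) {g : Sym2 (Fin (2*k+2))} (hs : Safe k j g) :
    ∃ u v : Fin (2*k+2), g = s(u, v) ∧ rho k u ≤ j ∧ j < rho k v ∧
      (u.val = 2*k+1-j ∨ v.val = j+1) := by
  obtain ⟨⟨u, v, rfl, h1, h2⟩, hnc⟩ := hs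
  refine ⟨u, v, rfl, h1, h2, ?_⟩
  by_contra hcon
  push_neg at hcon
  obtain ⟨hu2, hv2⟩ := hcon
  apply hnc
  have hu : u = vof k u.val := Fin.ext (vof_val u.isLt).symm
  have hv : v = vof k v.val := Fin.ext (vof_val v.isLt).symm
  have hub := u.isLt
  have hvb := v.isLt
  simp only [rho] at h1 h2
  rw [hu, hv, fE]
  rw [crosses_vof_char (by omega) (by omega) (by omega) (by omega) (by omega) (by omega)]
  refine ⟨by omega, ?_⟩
  simp only [Xor', Xor, btwN]
  omega

lemma not_both_safe {k j₁ j₂ : ℕ} (h12 : j₁ < j₂) (hj₂ : j₂ < k)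
    {S : Finset (Sym2 (Fin (2*k+2)))}
    (hconn : (SimpleGraph.fromEdgeSet ((S : Set (Sym2 (Fin (2*k+2)))))).Connected)
    (hNCg : ∀ h ∈ S, ¬ Crosses h s(vof k (2*k+1-j₁), vof k (j₂+1)))
    (hnu1 : nuP k j₁ S) (hnu2 : nuP k j₂ S) : False := by
  set G := SimpleGraph.fromEdgeSet ((S : Set (Sym2 (Fin (2*k+2))))) with hG
  set src : Fin (2*k+2) := vof k (2*k+1-j₁) with hsrc
  set tgt : Fin (2*k+2) := vof k (j₂+1) with htgt
  have hsrcval : src.val = 2*k+1-j₁ := vof_val (by omega)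
  have htgtval : tgt.val = j₂+1 := vof_val (by omega)
  have good : ∃ h ∈ S, (CutX k j₁ h ∧ ¬ Crosses h (fE k j₁)) ∨
      (CutX k j₂ h ∧ ¬ Crosses h (fE k j₂)) := by
    obtain ⟨W⟩ := hconn.preconnected src tgt
    have aux : ∀ (v tgt' : Fin (2*k+2)) (_ : G.Walk v tgt'), tgt' = tgt →
        ((v.val ≤ j₂ ∨ 2*k+2-j₁ ≤ v.val) ∨ v = src) →
        ∃ h ∈ S, (CutX k j₁ h ∧ ¬ Crosses h (fE k j₁)) ∨
          (CutX k j₂ h ∧ ¬ Crosses h (fE k j₂)) := by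
      intro v tgt' W
      induction W with
      | nil =>
        rintro rfl hL
        exfalso
        rcases hL with hL | heq
        · omega
        · have := congrArg Fin.val heq
          omega
      | @cons u v w hadj W ih =>
        rintro rfl hL
        obtain ⟨hmem, hune⟩ := (SimpleGraph.fromEdgeSet_adj _).mp hadj
        rw [Finset.mem_coe] at hmem
        by_cases hvL : (v.val ≤ j₂ ∨ 2*k+2-j₁ ≤ v.val) ∨ v = src
        · exact ih rfl hvL
        · push_neg at hvL
          obtain ⟨hv1, hv2⟩ := hvL
          have hvne : v.val ≠ 2*k+1-j₁ := fun h => hv2 (Fin.ext (by rw [h, hsrcval]))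
          have hvrange : j₂+1 ≤ v.val ∧ v.val ≤ 2*k-j₁ := by omega
          have hvb := v.isLt
          have hub := u.isLt
          rcases hL with hL | heq
          · -- u ∈ L side
            by_cases hvt : v.val = j₂+1
            · refine ⟨s(u, v), hmem, Or.inr ⟨⟨u, v, rfl, ?_, ?_⟩, ?_⟩⟩
              · simp only [rho]; omega
              · simp only [rho]; omega
              · have hvt' : v = vof k (j₂+1) := Fin.ext (by rw [vof_val (by omega)]; exact hvt)
                exact crosses_shared (Sym2.mem_mk_right _ _)
                  (by rw [hvt', fE]; exact Sym2.mem_mk_left _ _)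
            · exfalso
              apply hNCg s(u, v) hmem
              have hu' : u = vof k u.val := Fin.ext (vof_val u.isLt).symm
              have hv' : v = vof k v.val := Fin.ext (vof_val v.isLt).symm
              rw [hsrc, htgt, hu', hv']
              rw [crosses_vof_char (by omega) (by omega) (by omega) (by omega) (by omega)
                (by omega)]
              refine ⟨by omega, ?_⟩
              simp only [Xor', Xor, btwN]
              omega
          · -- u = src : good for j₁
            have hu2 : u = vof k (2*k+1-j₁) := heq.trans hsrc
            have huval : u.val = 2*k+1-j₁ := by rw [hu2, vof_val (by omega)]
            refine ⟨s(u, v), hmem, Or.inl ⟨⟨u, v, rfl, ?_, ?_⟩, ?_⟩⟩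
            · simp only [rho]; omega
            · simp only [rho]; omega
            · exact crosses_shared (Sym2.mem_mk_left _ _)
                (by rw [hu2, fE]; exact Sym2.mem_mk_right _ _)
    exact aux _ _ W rfl (Or.inr rfl)
  obtain ⟨h, hhS, hgood⟩ := good
  rcases hgood with ⟨hc, hnc⟩ | ⟨hc, hnc⟩
  · exact hnc (hnu1 h hhS hc)
  · exact hnc (hnu2 h hhS hc)

lemma drop_cert {k j : ℕ} {S S' : Finset (Sym2 (Fin (2*k+2)))} {r g : Sym2 (Fin (2*k+2))}
    (hSS' : ∀ x, x ∈ S' ↔ (x ∈ S ∧ x ≠ r) ∨ x = g)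
    (hdrop : phiG k j S' < phiG k j S) :
    (g = fE k j ∧ fE k j ∉ S) ∨ (Safe k j g ∧ nuP k j S) := by
  have h1 : (fE k j ∈ S' ∧ fE k j ∉ S) ∨ (nuP k j S ∧ ¬ nuP k j S') := by
    by_contra hc
    push_neg at hc
    obtain ⟨hc1, hc2⟩ := hc
    have e1 : (if fE k j ∈ S then (0:ℕ) else 1) ≤ (if fE k j ∈ S' then (0:ℕ) else 1) := by
      by_cases hA' : fE k j ∈ S'
      · rw [if_pos hA', if_pos (hc1 hA')]
      · rw [if_neg hA']
        split_ifs <;> omega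
    have e2 : (if nuP k j S then (1:ℕ) else 0) ≤ (if nuP k j S' then (1:ℕ) else 0) := by
      by_cases hN : nuP k j S
      · rw [if_pos hN, if_pos (hc2 hN)]
      · rw [if_neg hN]
        split_ifs <;> omega
    rw [phiG, phiG] at hdrop
    omega
  rcases h1 with ⟨hA', hA⟩ | ⟨hN, hN'⟩
  · left
    refine ⟨?_, hA⟩
    rcases (hSS' _).mp hA' with ⟨hin, -⟩ | heq
    · exact absurd hin hA
    · exact heq.symm
  · right
    refine ⟨?_, hN⟩
    rw [nuP] at hN'
    push_neg at hN'
    obtain ⟨e, heS', hcut, hnc⟩ := hN'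
    rcases (hSS' e).mp heS' with ⟨hin, -⟩ | rfl
    · exact absurd (hN e hin hcut) hnc
    · exact ⟨hcut, hnc⟩

lemma not_nuP_of_g {k j : ℕ} (hj : j < k) {S : Finset (Sym2 (Fin (2*k+2)))}
    (hconn : (SimpleGraph.fromEdgeSet ((S : Set (Sym2 (Fin (2*k+2)))))).Connected)
    (hNC : ∀ h ∈ S, ¬ Crosses h (fE k j)) : ¬ nuP k j S := by
  intro hnu
  obtain ⟨h, hhS, hcut⟩ := exists_cutX hj hconn
  exact hNC h hhS (hnu h hhS hcut)

lemma phiG_drop_le_one {k j : ℕ} (hj : j < k) {S S' : Finset (Sym2 (Fin (2*k+2)))}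
    {r g : Sym2 (Fin (2*k+2))}
    (hconn : (SimpleGraph.fromEdgeSet ((S : Set (Sym2 (Fin (2*k+2)))))).Connected)
    (hSS' : ∀ x, x ∈ S' ↔ (x ∈ S ∧ x ≠ r) ∨ x = g)
    (hNC : ∀ h ∈ S, ¬ Crosses h g) :
    phiG k j S ≤ phiG k j S' + 1 := by
  by_cases hgf : g = fE k j
  · have hN : ¬ nuP k j S := not_nuP_of_g hj hconn (hgf ▸ hNC)
    rw [phiG, if_neg hN]
    split_ifs <;> omega
  · have hc1 : fE k j ∈ S' → fE k j ∈ S := by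
      intro hA'
      rcases (hSS' _).mp hA' with ⟨hin, -⟩ | heq
      · exact hin
      · exact absurd heq.symm hgf
    rw [phiG, phiG]
    by_cases hA' : fE k j ∈ S'
    · rw [if_pos hA', if_pos (hc1 hA')]
      split_ifs <;> omega
    · rw [if_neg hA']
      split_ifs <;> omega

lemma val_of_eq_vof {k x : ℕ} {p : Fin (2*k+2)} (h : p = vof k x) (hx : x < 2*k+2) :
    p.val = x := by rw [h, vof_val hx]

lemma drops_unique {k : ℕ} {S S' : Finset (Sym2 (Fin (2*k+2)))} {r g : Sym2 (Fin (2*k+2))}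
    (hconn : (SimpleGraph.fromEdgeSet ((S : Set (Sym2 (Fin (2*k+2)))))).Connected)
    (hSS' : ∀ x, x ∈ S' ↔ (x ∈ S ∧ x ≠ r) ∨ x = g)
    (hNC : ∀ h ∈ S, ¬ Crosses h g)
    {j j' : ℕ} (hj : j < k) (hj' : j' < k) (hne : j ≠ j')
    (hd : phiG k j S' < phiG k j S) (hd' : phiG k j' S' < phiG k j' S) : False := by
  have c := drop_cert hSS' hd
  have c' := drop_cert hSS' hd'
  -- helper to dispatch the mixed case (g = fE j and Safe j' g)
  have mixed : ∀ a b : ℕ, a < k → b < k → a ≠ b → g = fE k a → Safe k b g → False := by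
    intro a b ha hb hab hgf hsafe
    obtain ⟨p, q, hpq, h1, h2, h3⟩ := safe_cases hb hsafe
    rw [hgf, fE] at hpq
    rw [Sym2.eq_iff] at hpq
    simp only [rho] at h1 h2
    rcases hpq with ⟨hp, hq⟩ | ⟨hp, hq⟩
    · have e1 : (a+1 : ℕ) = p.val := (val_of_eq_vof hp.symm (by omega)).symm
      have e2 : (2*k+1-a : ℕ) = q.val := (val_of_eq_vof hq.symm (by omega)).symm
      omega
    · have e1 : (2*k+1-a : ℕ) = p.val := (val_of_eq_vof hq.symm (by omega)).symm
      have e2 : (a+1 : ℕ) = q.val := (val_of_eq_vof hp.symm (by omega)).symm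
      omega
  rcases c with ⟨hgf, -⟩ | ⟨hsafe, hnu⟩ <;> rcases c' with ⟨hgf', -⟩ | ⟨hsafe', hnu'⟩
  · -- both g = fE
    rw [hgf, fE] at hgf'
    rw [fE, sym2_vof_eq (by omega) (by omega) (by omega) (by omega)] at hgf'
    omega
  · exact mixed j j' hj hj' hne hgf hsafe'
  · exact mixed j' j hj' hj (Ne.symm hne) hgf' hsafe
  · -- both Safe
    obtain ⟨p, q, hpq, h1, h2, h3⟩ := safe_cases hj hsafe
    obtain ⟨p', q', hpq', h1', h2', h3'⟩ := safe_cases hj' hsafe'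
    rw [hpq] at hpq'
    rw [Sym2.eq_iff] at hpq'
    have hpb := p.isLt; have hqb := q.isLt
    rcases hpq' with ⟨hp, hq⟩ | ⟨hp, hq⟩
    · -- same orientation
      rw [← hp] at h1' h3'
      rw [← hq] at h2' h3'
      simp only [rho] at h1 h2 h1' h2'
      -- subcases on endpoint certificates
      rcases h3 with hc3 | hc3 <;> rcases h3' with hc3' | hc3'
      · omega
      · -- p = b_j , q = a_{j'+1} : j < j'
        have hlt : j < j' := by omega
        have hgeq : g = s(vof k (2*k+1-j), vof k (j'+1)) := by
          rw [hpq]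
          have hp2 : p = vof k (2*k+1-j) := Fin.ext (by rw [vof_val (by omega)]; exact hc3)
          have hq2 : q = vof k (j'+1) := Fin.ext (by rw [vof_val (by omega)]; exact hc3')
          rw [hp2, hq2]
        exact not_both_safe hlt hj' hconn (fun h hh => hgeq ▸ hNC h hh) hnu hnu'
      · -- q = a_{j+1} , p = b_{j'} : j' < j
        have hlt : j' < j := by omega
        have hgeq : g = s(vof k (2*k+1-j'), vof k (j+1)) := by
          rw [hpq]
          have hp2 : p = vof k (2*k+1-j') := Fin.ext (by rw [vof_val (by omega)]; exact hc3')
          have hq2 : q = vof k (j+1) := Fin.ext (by rw [vof_val (by omega)]; exact hc3)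
          rw [hp2, hq2, Sym2.eq_swap]
        exact not_both_safe hlt hj hconn (fun h hh => hgeq ▸ hNC h hh) hnu' hnu
      · omega
    · -- opposite orientation : contradiction
      rw [← hq] at h1'
      rw [← hp] at h2'
      simp only [rho] at h1 h2 h1' h2'
      omega

lemma Phi_step {k : ℕ} {S S' : Finset (Sym2 (Fin (2*k+2)))} {r g : Sym2 (Fin (2*k+2))}
    (hconn : (SimpleGraph.fromEdgeSet ((S : Set (Sym2 (Fin (2*k+2)))))).Connected)
    (hSS' : ∀ x, x ∈ S' ↔ (x ∈ S ∧ x ≠ r) ∨ x = g)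
    (hNC : ∀ h ∈ S, ¬ Crosses h g) :
    Phi k S ≤ Phi k S' + 1 := by
  by_cases hex : ∃ j ∈ range k, phiG k j S' < phiG k j S
  · obtain ⟨j₀, hj₀r, hj₀⟩ := hex
    have hsum : ∀ j ∈ range k, phiG k j S ≤ phiG k j S' + (if j = j₀ then 1 else 0) := by
      intro j hjr
      by_cases hje : j = j₀
      · subst hje
        rw [if_pos rfl]
        exact phiG_drop_le_one (mem_range.mp hjr) hconn hSS' hNC
      · rw [if_neg hje]
        by_contra hlt
        push_neg at hlt
        exact drops_unique hconn hSS' hNC (mem_range.mp hjr) (mem_range.mp hj₀r) hje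
          (by omega) hj₀
    calc Phi k S ≤ ∑ j ∈ range k, (phiG k j S' + if j = j₀ then 1 else 0) :=
          Finset.sum_le_sum hsum
      _ = Phi k S' + 1 := by
          rw [Finset.sum_add_distrib, Finset.sum_ite_eq' (range k) j₀ (fun _ => (1:ℕ)),
            if_pos hj₀r, Phi]
  · push_neg at hex
    exact le_trans (Finset.sum_le_sum fun j hj => hex j hj) (Nat.le_succ _)

lemma step_to_Phi {k : ℕ} {S S' : Finset (Sym2 (Fin (2*k+2)))}
    (hS : IsNCST (2*k+2) S) (h : NCFlipStep S S') : Phi k S ≤ Phi k S' + 1 := by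
  obtain ⟨⟨h1, h2⟩, hU⟩ := h
  obtain ⟨r, hr⟩ := Finset.card_eq_one.mp h1
  obtain ⟨g, hg⟩ := Finset.card_eq_one.mp h2
  have hrS : r ∈ S ∧ r ∉ S' := by
    have : r ∈ S \ S' := hr ▸ Finset.mem_singleton_self r
    exact ⟨(Finset.mem_sdiff.mp this).1, (Finset.mem_sdiff.mp this).2⟩
  have hgS : g ∈ S' ∧ g ∉ S := by
    have : g ∈ S' \ S := hg ▸ Finset.mem_singleton_self g
    exact ⟨(Finset.mem_sdiff.mp this).1, (Finset.mem_sdiff.mp this).2⟩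
  have hSS' : ∀ x, x ∈ S' ↔ (x ∈ S ∧ x ≠ r) ∨ x = g := by
    intro x
    constructor
    · intro hx
      by_cases hxg : x = g
      · exact Or.inr hxg
      · left
        refine ⟨?_, ?_⟩
        · by_contra hxS
          have : x ∈ S' \ S := Finset.mem_sdiff.mpr ⟨hx, hxS⟩
          rw [hg, Finset.mem_singleton] at this
          exact hxg this
        · rintro rfl
          exact hrS.2 hx
    · rintro (⟨hxS, hxr⟩ | rfl)
      · by_contra hxS'
        have : x ∈ S \ S' := Finset.mem_sdiff.mpr ⟨hxS, hxS'⟩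
        rw [hr, Finset.mem_singleton] at this
        exact hxr this
      · exact hgS.1
  have hNC : ∀ h ∈ S, ¬ Crosses h g :=
    fun h hh => hU h (Finset.mem_union_left _ hh) g (Finset.mem_union_right _ hgS.1)
  exact Phi_step hS.2.2.1 hSS' hNC

lemma seq_bound {k : ℕ} : ∀ (L : List (Finset (Sym2 (Fin (2*k+2))))),
    (∀ X ∈ L, IsNCST (2*k+2) X) → L.Chain' NCFlipStep →
    ∀ {A B}, L.head? = some A → L.getLast? = some B →
    Phi k A ≤ Phi k B + (L.length - 1) := by
  intro L
  induction L with
  | nil => intro _ _ A B hA _; simp at hA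
  | cons X L' ih =>
    intro hall hchain A B hA hB
    have hAX : A = X := by simpa using hA.symm
    subst hAX
    match L', hchain, hB with
    | [], _, hB =>
      have : B = A := by simpa using hB.symm
      subst this
      simp
    | Y :: L'', hchain, hB =>
      have hstep : NCFlipStep A Y := (List.isChain_cons_cons.mp hchain).1
      have hchain' : (Y :: L'').Chain' NCFlipStep := (List.isChain_cons_cons.mp hchain).2
      have hB' : (Y :: L'').getLast? = some B := by
        rw [← hB]
        exact List.getLast?_cons_cons.symm
      have hrec := ih (fun X hX => hall X (List.mem_cons_of_mem _ hX)) hchain'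
        rfl hB'
      have h1 : Phi k A ≤ Phi k Y + 1 :=
        step_to_Phi (hall A List.mem_cons_self) hstep
      simp only [List.length_cons] at hrec ⊢
      omega


/-- For every positive `k` there are non-crossing spanning trees on `2k + 2`
points in convex position with symmetric-difference distance `k` such that any
non-crossing flip sequence between them has length at least `2k`. -/
theorem ncflip_lower_bound_family (k : ℕ) (hk : 0 < k) :
    ∃ T T' : Finset (Sym2 (Fin (2 * k + 2))),
      IsNCST (2 * k + 2) T ∧ IsNCST (2 * k + 2) T' ∧
      (T \ T').card = k ∧
      ∀ ℓ : ℕ, HasNCFlipSeq (2 * k + 2) T T' ℓ → 2 * k ≤ ℓ := by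
  refine ⟨TT k, TT' k,
    ⟨TT_loopless, by rw [TT_card]; omega, TT_conn, TT_noncross⟩,
    ⟨TT'_loopless, by rw [TT'_card]; omega, TT'_conn, TT'_noncross⟩,
    sdiff_card, ?_⟩
  rintro ℓ ⟨L, hall, hchain, hlen, hhead, hlast⟩
  have hb := seq_bound L hall hchain hhead hlast
  rw [Phi_TT, Phi_TT', hlen] at hb
  omega
end
end

section
/- On 4 points v₁,v₂,v₃,v₄ in convex position (cyclic order v₁,v₃,v₄,v₂), let T = {v₁v₂, v₃v₄, v₂v₄} and T' = {v₁v₂, v₃v₄, v₁v₃}. Then δ(T,T')=1 but every non-crossing flip sequence from T to T' has length at least 2. -/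
open Finset

noncomputable section
attribute [local instance] Classical.propDecidable

/-- The 4-point gadget tree `T = {v₁v₂, v₃v₄, v₂v₄}`, with the points labeled
along the hull so that the chords `v₂v₄` and `v₁v₃` cross:
`v₁ ↦ 0, v₂ ↦ 1, v₃ ↦ 2, v₄ ↦ 3`. -/
def T4 : Finset (Sym2 (Fin 4)) := {s(0, 1), s(2, 3), s(1, 3)}

/-- The 4-point gadget tree `T' = {v₁v₂, v₃v₄, v₁v₃}`. -/
def T4' : Finset (Sym2 (Fin 4)) := {s(0, 1), s(2, 3), s(0, 2)}

theorem HasNCFlipSeq.eq_of_zero {n : ℕ} {T₁ T₂ : Finset (Sym2 (Fin n))}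
    (h : HasNCFlipSeq n T₁ T₂ 0) : T₁ = T₂ := by
  obtain ⟨L, -, -, hlen, hhead, hlast⟩ := h
  obtain ⟨A, rfl⟩ := List.length_eq_one_iff.mp hlen
  simp_all

theorem HasNCFlipSeq.ncFlipStep_of_one {n : ℕ} {T₁ T₂ : Finset (Sym2 (Fin n))}
    (h : HasNCFlipSeq n T₁ T₂ 1) : NCFlipStep T₁ T₂ := by
  obtain ⟨L, -, hchain, hlen, hhead, hlast⟩ := h
  obtain ⟨A, B, rfl⟩ := List.length_eq_two.mp hlen
  simp only [List.head?_cons, List.getLast?_cons_cons, List.getLast?_singleton,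
    Option.some.injEq] at hhead hlast
  subst hhead hlast
  exact (List.isChain_cons_cons.mp hchain).1

theorem NCFlipStep.not_crosses {n : ℕ} {T T' : Finset (Sym2 (Fin n))} (h : NCFlipStep T T')
    {e f : Sym2 (Fin n)} (he : e ∈ T) (hf : f ∈ T') : ¬ Crosses e f :=
  h.2 e (mem_union_left _ he) f (mem_union_right _ hf)

theorem crosses_one_three_zero_two : Crosses (s(1, 3) : Sym2 (Fin 4)) s(0, 2) := by
  refine ⟨1, 3, 0, 2, rfl, rfl, by decide, by decide, by decide, by decide, by decide,
    by decide, ?_⟩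
  exact .inr ⟨by unfold CBtw; decide, by unfold CBtw; decide⟩

theorem not_ncFlipStep_T4_T4' : ¬ NCFlipStep T4 T4' := fun h =>
  h.not_crosses (by decide) (by decide) crosses_one_three_zero_two

/-- `δ(T₄, T₄') = 1` but every non-crossing flip sequence from `T₄` to `T₄'`
has length at least `2`. -/
theorem gadget_ncflip_lower_bound :
    (T4 \ T4').card = 1 ∧ ∀ ℓ : ℕ, HasNCFlipSeq 4 T4 T4' ℓ → 2 ≤ ℓ := by
  refine ⟨by decide, fun ℓ hseq => ?_⟩
  by_contra! hℓ
  interval_cases ℓ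
  · exact absurd hseq.eq_of_zero (by decide)
  · exact not_ncFlipStep_T4_T4' hseq.ncFlipStep_of_one
end
end

section
/- Let T₁, T₂ be a nice pair of non-crossing spanning trees on a convex point set, let e be a chord of T₁, and let A be a side of e containing at least two holes, at least one of which is a bad hole h with respect to T₂. Then one can fill h in T₁ by flipping a chord of T₁ different from e, and fill h in T₂ by flipping a chord of T₂ with both endpoints in A; the resulting pair of trees is again a nice pair and A has one fewer bad hole. -/
open Finset

noncomputable section
attribute [local instance] Classical.propDecidable

/-- Bad holes of `T` in `A` with respect to `T'`: holes lying inside a side of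
a chord of `T'` strictly contained in `A`. -/
def badHolesIn (n : ℕ) (T T' : Finset (Sym2 (Fin n))) (A : Finset (Fin n)) :
    Finset (Fin n) :=
  (holesIn n T A).filter (fun i => ∃ c d : Fin n, s(c, d) ∈ T' ∧
    ¬ IsBorderEdge s(c, d) ∧ sideOf c d ⊂ A ∧
    i ∈ sideOf c d ∧ nextIdx i ∈ sideOf c d)


namespace Aux
open SimpleGraph
set_option linter.unusedSectionVars false

variable {n : ℕ} [NeZero n]

lemma npos : 0 < n := Nat.pos_of_ne_zero (NeZero.ne n)

lemma dd_lt (x y : Fin n) : (x - y).val < n := (x - y).isLt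

lemma dd_self (x : Fin n) : (x - x).val = 0 := by simp

lemma dd_eq_zero_iff {x y : Fin n} : (x - y).val = 0 ↔ x = y := by
  constructor
  · intro h
    have : x - y = 0 := Fin.ext (by simpa using h)
    exact sub_eq_zero.mp this
  · rintro rfl; simp

lemma val_add_of_lt {x y : Fin n} (h : x.val + y.val < n) : (x + y).val = x.val + y.val := by
  rw [Fin.add_def]; exact Nat.mod_eq_of_lt h

lemma val_sub_of_le {A B : Fin n} (h : B.val ≤ A.val) : (A - B).val = A.val - B.val := by
  rw [Fin.sub_def]
  have h1 : B.val ≤ n := Nat.le_of_lt B.isLt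
  have h2 : n - B.val + A.val = n + (A.val - B.val) := by omega
  show (n - B.val + A.val) % n = A.val - B.val
  rw [h2, Nat.add_mod_left]
  exact Nat.mod_eq_of_lt (by omega)

lemma dd_add_dd {x y : Fin n} (h : x ≠ y) : (x - y).val + (y - x).val = n := by
  have h1 : (x - y) + (y - x) = 0 := by abel
  have h2 : ((x - y).val + (y - x).val) % n = 0 := by
    have := congrArg Fin.val h1
    rwa [Fin.add_def] at this
  have h3 : (x - y).val ≠ 0 := fun hc => h (dd_eq_zero_iff.mp hc)
  have h4 : (x - y).val < n := dd_lt _ _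
  have h5 : (y - x).val < n := dd_lt _ _
  rcases Nat.dvd_of_mod_eq_zero h2 with ⟨k, hk⟩
  rcases Nat.lt_or_ge k 2 with hk2 | hk2
  · interval_cases k <;> omega
  · have h6 : n * 2 ≤ n * k := Nat.mul_le_mul_left n hk2
    omega

lemma dd_sub {x y z : Fin n} (h : (y - x).val ≤ (z - x).val) :
    (z - y).val = (z - x).val - (y - x).val := by
  have h1 : z - y = (z - x) - (y - x) := by abel
  rw [h1, val_sub_of_le h]

lemma dd_add {x y z : Fin n} (h : (y - x).val + (z - y).val < n) :
    (z - x).val = (y - x).val + (z - y).val := by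
  have h1 : z - x = (y - x) + (z - y) := by abel
  rw [h1, val_add_of_lt h]

lemma dd_right_cancel {x y z : Fin n} (h : (x - z).val = (y - z).val) : x = y := by
  have : x - z = y - z := Fin.ext h
  exact sub_left_inj.mp this

lemma one_val (hn : 2 ≤ n) : (1 : Fin n).val = 1 := by
  rw [Fin.val_one']; exact Nat.mod_eq_of_lt hn

lemma dd_succ {x y : Fin n} (hn : 2 ≤ n) (h : (x - y).val ≠ n - 1) :
    (x + 1 - y).val = (x - y).val + 1 := by
  have h1 : x + 1 - y = (x - y) + 1 := by abel
  rw [h1, val_add_of_lt]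
  · rw [one_val hn]
  · rw [one_val hn]; have := dd_lt x y; omega

lemma dd_eq_last {x y : Fin n} (hn : 2 ≤ n) (h : (x - y).val = n - 1) : x + 1 = y := by
  have h1 : x + 1 - y = (x - y) + 1 := by abel
  have h2 : ((x - y) + 1).val = 0 := by
    rw [Fin.add_def, one_val hn, h]
    show (n - 1 + 1) % n = 0
    have h3 : n - 1 + 1 = n := by omega
    rw [h3, Nat.mod_self]
  have : (x + 1 - y).val = 0 := by rw [h1]; exact h2
  exact dd_eq_zero_iff.mp this

lemma nextIdx_eq (i : Fin n) : nextIdx i = i + 1 := by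
  apply Fin.ext
  rw [Fin.add_def, Fin.val_one']
  show (i.val + 1) % n = (i.val + 1 % n) % n
  rcases Nat.lt_or_ge n 2 with hn | hn
  · have h1 : n = 1 := by have := (npos : 0 < n); omega
    subst h1; omega
  · rw [Nat.mod_eq_of_lt hn]

lemma border_iff {p q : Fin n} (hn : 2 ≤ n) :
    IsBorderEdge (s(p, q) : Sym2 (Fin n)) ↔ q = p + 1 ∨ p = q + 1 := by
  constructor
  · rintro ⟨t, ht⟩
    rw [nextIdx_eq] at ht
    rcases Sym2.eq_iff.mp ht with ⟨rfl, h2⟩ | ⟨h1, rfl⟩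
    · exact Or.inl h2
    · exact Or.inr h1
  · rintro (h | h)
    · exact ⟨p, by rw [nextIdx_eq, h]⟩
    · exact ⟨q, by rw [nextIdx_eq, h, Sym2.eq_swap]⟩

lemma mem_sideOf {x p q : Fin n} : x ∈ sideOf p q ↔ (x - p).val ≤ (q - p).val := by
  unfold sideOf CBtw
  simp only [Finset.mem_filter, Finset.mem_univ, true_and]
  constructor
  · rintro (rfl | rfl | ⟨h1, h2⟩)
    · simp
    · exact le_refl _
    · exact le_of_lt h2
  · intro h
    rcases Nat.eq_zero_or_pos (x - p).val with h0 | h0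
    · exact Or.inl (dd_eq_zero_iff.mp h0)
    · rcases eq_or_lt_of_le h with he | hl
      · exact Or.inr (Or.inl (dd_right_cancel he))
      · exact Or.inr (Or.inr ⟨h0, hl⟩)


section GraphGeneric


section
set_option linter.unusedSectionVars false
variable {V : Type*}

lemma preconnected_transfer {G G' : SimpleGraph V} (hG : G.Preconnected)
    (h : ∀ u v, G.Adj u v → G'.Reachable u v) : G'.Preconnected := by
  intro u v
  obtain ⟨W⟩ := hG u v
  induction W with
  | nil => exact Reachable.refl _
  | cons hadj _ ih => exact (h _ _ hadj).trans ih

lemma walk_split {G : SimpleGraph V} {p q : V} (W : G.Walk p q) {e : Sym2 V}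
    (he : e ∈ W.edges) :
    ∃ (x₁ x₂ : V) (h : G.Adj x₁ x₂) (W₁ : G.Walk p x₁) (W₂ : G.Walk x₂ q),
      e = s(x₁, x₂) ∧ W = W₁.append (SimpleGraph.Walk.cons h W₂) := by
  induction W with
  | nil => simp at he
  | @cons u v w hadj W' ih =>
    rw [SimpleGraph.Walk.edges_cons] at he
    rcases List.mem_cons.mp he with he1 | he2
    · exact ⟨u, v, hadj, SimpleGraph.Walk.nil, W', he1, by simp⟩
    · obtain ⟨x₁, x₂, h, W₁, W₂, heq, hW'⟩ := ih he2
      exact ⟨x₁, x₂, h, SimpleGraph.Walk.cons hadj W₁, W₂, heq,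
        by rw [SimpleGraph.Walk.cons_append, ← hW']⟩

end

section
variable {n : ℕ}

lemma mem_of_adj {T : Finset (Sym2 (Fin n))} {u v : Fin n}
    (h : (SimpleGraph.fromEdgeSet (↑T : Set (Sym2 (Fin n)))).Adj u v) : s(u,v) ∈ T ∧ u ≠ v := by
  rw [SimpleGraph.fromEdgeSet_adj] at h; exact_mod_cast h

lemma edge_mem_of_walk {T : Finset (Sym2 (Fin n))} {x y : Fin n}
    {W : (SimpleGraph.fromEdgeSet (↑T : Set (Sym2 (Fin n)))).Walk x y} {f : Sym2 (Fin n)}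
    (hf : f ∈ W.edges) : f ∈ T ∧ ¬ f.IsDiag := by
  have := W.edges_subset_edgeSet hf
  rw [SimpleGraph.edgeSet_fromEdgeSet] at this
  exact ⟨by exact_mod_cast this.1, this.2⟩

lemma swap_connected {T : Finset (Sym2 (Fin n))}
    (hconn : (SimpleGraph.fromEdgeSet (↑T : Set (Sym2 (Fin n)))).Connected) {p q : Fin n}
    (hpq : p ≠ q) (W : (SimpleGraph.fromEdgeSet (↑T : Set (Sym2 (Fin n)))).Walk p q)
    (hW : W.IsPath) {e : Sym2 (Fin n)} (heW : e ∈ W.edges) :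
    (SimpleGraph.fromEdgeSet (↑(insert s(p,q) (T.erase e)) : Set (Sym2 (Fin n)))).Connected := by
  classical
  set G' := SimpleGraph.fromEdgeSet (↑(insert s(p,q) (T.erase e)) : Set (Sym2 (Fin n))) with hG'
  have hsub : ∀ (x y : Fin n)
      (Wa : (SimpleGraph.fromEdgeSet (↑T : Set (Sym2 (Fin n)))).Walk x y),
      (e ∉ Wa.edges) → G'.Reachable x y := by
    intro x y Wa hWa
    refine ⟨Wa.transfer G' ?_⟩
    intro f hf
    obtain ⟨hfT, hfd⟩ := edge_mem_of_walk hf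
    rw [hG', SimpleGraph.edgeSet_fromEdgeSet]
    refine ⟨?_, hfd⟩
    have : f ≠ e := fun hfe => hWa (hfe ▸ hf)
    simp only [Finset.coe_insert, Set.mem_insert_iff, Finset.mem_coe, Finset.mem_erase]
    exact Or.inr ⟨this, hfT⟩
  rw [SimpleGraph.connected_iff]
  refine ⟨?_, ⟨p⟩⟩
  · apply preconnected_transfer hconn.preconnected
    intro u v huv
    obtain ⟨huvT, huvne⟩ := mem_of_adj huv
    by_cases hne : s(u,v) = e
    · obtain ⟨x₁, x₂, hadj, W₁, W₂, heq, hWeq⟩ := walk_split W heW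
      have hnodup : W.edges.Nodup := hW.edges_nodup
      have hedges : W.edges = W₁.edges ++ (s(x₁,x₂) :: W₂.edges) := by
        rw [hWeq, SimpleGraph.Walk.edges_append, SimpleGraph.Walk.edges_cons]
      rw [hedges] at hnodup
      rw [List.nodup_append] at hnodup
      have he1 : e ∉ W₁.edges := by
        intro hc; exact (hnodup.2.2 _ hc _ (by rw [heq]; exact List.mem_cons_self) rfl)
      have he2 : e ∉ W₂.edges := by
        intro hc
        have := hnodup.2.1
        rw [List.nodup_cons] at this
        exact this.1 (heq ▸ hc)
      have r1 : G'.Reachable p x₁ := hsub _ _ W₁ he1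
      have r2 : G'.Reachable x₂ q := hsub _ _ W₂ he2
      have rpq : G'.Reachable p q := by
        refine SimpleGraph.Adj.reachable ?_
        rw [hG', SimpleGraph.fromEdgeSet_adj]
        exact ⟨by simp, hpq⟩
      have rx : G'.Reachable x₁ x₂ := (r1.symm.trans rpq).trans r2.symm
      rcases Sym2.eq_iff.mp (hne.trans heq) with ⟨h1, h2⟩ | ⟨h1, h2⟩
      · rw [h1, h2]; exact rx
      · rw [h1, h2]; exact rx.symm
    · refine SimpleGraph.Adj.reachable ?_
      rw [hG', SimpleGraph.fromEdgeSet_adj]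
      refine ⟨?_, huvne⟩
      simp only [Finset.coe_insert, Set.mem_insert_iff, Finset.mem_coe, Finset.mem_erase]
      exact Or.inr ⟨hne, huvT⟩

end

end GraphGeneric

section Main
set_option linter.unusedSectionVars false
variable {n : ℕ} [NeZero n]

set_option linter.unusedSectionVars false
variable {n : ℕ} [NeZero n]

lemma cbtw_succ_iff (hn : 2 ≤ n) {a b c : Fin n} (hca : c ≠ a) (hcb : c ≠ b)
    (hda : c + 1 ≠ a) (hdb : c + 1 ≠ b) : CBtw a c b ↔ CBtw a (c+1) b := by
  have h0 : (c - a).val ≠ 0 := fun h => hca (dd_eq_zero_iff.mp h)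
  have hlast : (c - a).val ≠ n - 1 := fun h => hda (dd_eq_last hn h)
  have hsucc : (c + 1 - a).val = (c - a).val + 1 := dd_succ hn hlast
  have hne1 : (c - a).val ≠ (b - a).val := fun h => hcb (dd_right_cancel h)
  have hne2 : (c + 1 - a).val ≠ (b - a).val := fun h => hdb (dd_right_cancel h)
  rw [hsucc] at hne2
  unfold CBtw
  rw [hsucc]
  omega

lemma not_crosses_border_right (hn : 2 ≤ n) {f h : Sym2 (Fin n)} (hb : IsBorderEdge h) :
    ¬ Crosses f h := by
  rintro ⟨a, b, c, d, hf, hh, hab, hac, had, hbc, hbd, hcd, hx⟩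
  rw [hh] at hb
  rcases (border_iff hn).mp hb with h1 | h1
  · have hiff := cbtw_succ_iff hn (c := c) (a := a) (b := b) hac.symm hbc.symm
      (by rw [← h1]; exact had.symm) (by rw [← h1]; exact hbd.symm)
    rw [← h1] at hiff
    rcases hx with ⟨p1, p2⟩ | ⟨p1, p2⟩
    · exact p2 (hiff.mp p1)
    · exact p2 (hiff.mpr p1)
  · have hiff := cbtw_succ_iff hn (c := d) (a := a) (b := b) had.symm hbd.symm
      (by rw [← h1]; exact hac.symm) (by rw [← h1]; exact hbc.symm)
    rw [← h1] at hiff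
    rcases hx with ⟨p1, p2⟩ | ⟨p1, p2⟩
    · exact p2 (hiff.mpr p1)
    · exact p2 (hiff.mp p1)

lemma not_crosses_border_left (hn : 2 ≤ n) {f h : Sym2 (Fin n)} (hb : IsBorderEdge h) :
    ¬ Crosses h f := by
  rintro ⟨a, b, c, d, hh, hf, hab, hac, had, hbc, hbd, hcd, hx⟩
  rw [hh] at hb
  rcases (border_iff hn).mp hb with h1 | h1
  · have hba : (b - a).val = 1 := by
      rw [h1]
      have : (a - a).val ≠ n - 1 := by rw [dd_self]; omega
      rw [dd_succ hn this, dd_self]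
    rcases hx with ⟨⟨p0, p1⟩, _⟩ | ⟨⟨p0, p1⟩, _⟩ <;> omega
  · have hab1 : (a - b).val = 1 := by
      rw [h1]
      have h2 : (b - b).val ≠ n - 1 := by rw [dd_self]; omega
      rw [dd_succ hn h2, dd_self]
    have hba : (b - a).val = n - 1 := by
      have := dd_add_dd (x := a) (y := b) hab
      omega
    have hcb : ∀ x : Fin n, x ≠ a → x ≠ b → CBtw a x b := by
      intro x hxa hxb
      refine ⟨Nat.pos_of_ne_zero fun h0 => hxa (dd_eq_zero_iff.mp h0), ?_⟩
      rw [hba]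
      have hlt := dd_lt x a
      rcases Nat.lt_or_ge (x - a).val (n - 1) with h2 | h2
      · exact h2
      · exfalso
        have h3 : (x - a).val = n - 1 := by omega
        have h4 := dd_eq_last hn h3
        rw [h1] at h4
        exact hxb (add_right_cancel h4)
    rcases hx with ⟨_, p2⟩ | ⟨_, p2⟩
    · exact p2 (hcb d had.symm hbd.symm)
    · exact p2 (hcb c hac.symm hbc.symm)

lemma endpoint_of_out {T : Finset (Sym2 (Fin n))} (hT : IsNCST n T) {u v x y : Fin n}
    (huv : s(u,v) ∈ T) (hxy : s(x,y) ∈ T) (hx : (x - u).val ≤ (v - u).val)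
    (hy : ¬ ((y - u).val ≤ (v - u).val)) : x = u ∨ x = v := by
  by_contra hc
  push_neg at hc
  obtain ⟨hxu, hxv⟩ := hc
  refine hT.2.2.2 _ huv _ hxy ⟨u, v, x, y, rfl, rfl, ?_, ?_, ?_, ?_, ?_, ?_, ?_⟩
  · intro h; exact hT.1 _ huv (by rw [h]; exact Sym2.mk_isDiag_iff.mpr rfl)
  · exact fun h => hxu h.symm
  · intro h; exact hy (by rw [← h]; simp)
  · exact fun h => hxv h.symm
  · intro h; exact hy (by rw [← h])
  · exact fun h => hy (h ▸ hx)
  · refine Or.inl ⟨⟨Nat.pos_of_ne_zero fun h0 => hxu (dd_eq_zero_iff.mp h0),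
      lt_of_le_of_ne hx fun h => hxv (dd_right_cancel h)⟩, fun hcb => hy (le_of_lt hcb.2)⟩

lemma reenter {T : Finset (Sym2 (Fin n))} (hT : IsNCST n T) {u v : Fin n} (huv : s(u,v) ∈ T) :
    ∀ {x y : Fin n} (W : (SimpleGraph.fromEdgeSet (↑T : Set (Sym2 (Fin n)))).Walk x y),
    (v - u).val < (x - u).val → (y - u).val ≤ (v - u).val →
    ∃ z, (z = u ∨ z = v) ∧
      ∃ W₂ : (SimpleGraph.fromEdgeSet (↑T : Set (Sym2 (Fin n)))).Walk z y,
        W₂.length < W.length := by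
  intro x y W
  induction W with
  | nil => intro h1 h2; omega
  | @cons p₁ p₂ p₃ hadj W' ih =>
    intro h1 h2
    by_cases hb : (p₂ - u).val ≤ (v - u).val
    · have hmem := mem_of_adj hadj
      have hbx : s(p₂, p₁) ∈ T := by rw [Sym2.eq_swap]; exact hmem.1
      have hz := endpoint_of_out hT huv hbx hb (by omega)
      exact ⟨p₂, hz, W', by simp [SimpleGraph.Walk.length_cons]⟩
    · obtain ⟨z, hz, W₂, hlen⟩ := ih (by omega) h2
      exact ⟨z, hz, W₂, by rw [SimpleGraph.Walk.length_cons]; omega⟩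

lemma confine {T : Finset (Sym2 (Fin n))} (hT : IsNCST n T) {u v : Fin n} (huv : s(u,v) ∈ T) :
    ∀ (N : ℕ) {x y : Fin n} (W : (SimpleGraph.fromEdgeSet (↑T : Set (Sym2 (Fin n)))).Walk x y),
    W.length ≤ N → (x - u).val ≤ (v - u).val → (y - u).val ≤ (v - u).val →
    ∃ W' : (SimpleGraph.fromEdgeSet (↑T : Set (Sym2 (Fin n)))).Walk x y,
      ∀ z ∈ W'.support, (z - u).val ≤ (v - u).val := by
  intro N
  induction N with
  | zero =>
    intro x y W hlen hx hy
    cases W with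
    | nil => exact ⟨SimpleGraph.Walk.nil, by intro z hz; simp at hz; subst hz; exact hx⟩
    | cons hadj W' => simp [SimpleGraph.Walk.length_cons] at hlen
  | succ N ihN =>
    intro x y W hlen hx hy
    cases W with
    | nil => exact ⟨SimpleGraph.Walk.nil, by intro z hz; simp at hz; subst hz; exact hx⟩
    | @cons _ b _ hadj W' =>
      rw [SimpleGraph.Walk.length_cons] at hlen
      by_cases hb : (b - u).val ≤ (v - u).val
      · obtain ⟨W'', hW''⟩ := ihN W' (by omega) hb hy
        refine ⟨SimpleGraph.Walk.cons hadj W'', ?_⟩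
        intro z hz
        rw [SimpleGraph.Walk.support_cons] at hz
        rcases List.mem_cons.mp hz with rfl | hz'
        · exact hx
        · exact hW'' z hz'
      · have hmem := mem_of_adj hadj
        have hx_uv : x = u ∨ x = v := endpoint_of_out hT huv hmem.1 hx (by omega)
        obtain ⟨z, hz, W₂, hlen₂⟩ := reenter hT huv W' (by omega) hy
        have hzin : (z - u).val ≤ (v - u).val := by
          rcases hz with rfl | rfl
          · rw [dd_self]; omega
          · exact le_refl _
        obtain ⟨W₃, hW₃⟩ := ihN W₂ (by omega) hzin hy
        by_cases hxz : x = z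
        · subst hxz; exact ⟨W₃, hW₃⟩
        · have hadj2 : (SimpleGraph.fromEdgeSet (↑T : Set (Sym2 (Fin n)))).Adj x z := by
            rw [SimpleGraph.fromEdgeSet_adj]
            refine ⟨?_, hxz⟩
            rcases hx_uv with h | h <;> rcases hz with h' | h'
            · exact absurd (h.trans h'.symm) hxz
            · rw [h, h']; exact_mod_cast huv
            · rw [h, h']; exact_mod_cast (show s(v,u) ∈ T by rw [Sym2.eq_swap]; exact huv)
            · exact absurd (h.trans h'.symm) hxz
          refine ⟨SimpleGraph.Walk.cons hadj2 W₃, ?_⟩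
          intro z' hz'
          rw [SimpleGraph.Walk.support_cons] at hz'
          rcases List.mem_cons.mp hz' with rfl | hz''
          · exact hx
          · exact hW₃ z' hz''

lemma cross_edge {T : Finset (Sym2 (Fin n))} {u : Fin n} {K : ℕ} :
    ∀ {x y : Fin n} (W : (SimpleGraph.fromEdgeSet (↑T : Set (Sym2 (Fin n)))).Walk x y),
    (y - u).val ≤ K → K < (x - u).val →
    ∃ p q : Fin n, s(p,q) ∈ W.edges ∧ (q - u).val ≤ K ∧ K < (p - u).val := by
  intro x y W
  induction W with
  | nil => intro h1 h2; omega
  | @cons p₁ p₂ p₃ hadj W' ih =>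
    intro h1 h2
    by_cases hb : (p₂ - u).val ≤ K
    · exact ⟨p₁, p₂, by rw [SimpleGraph.Walk.edges_cons]; exact List.mem_cons_self, hb, h2⟩
    · obtain ⟨p, q, hpq, hq, hp⟩ := ih h1 (by omega)
      exact ⟨p, q, by rw [SimpleGraph.Walk.edges_cons]; exact List.mem_cons_of_mem _ hpq, hq, hp⟩

lemma low_stay {T : Finset (Sym2 (Fin n))} {u : Fin n} {r : ℕ} :
    ∀ {x y : Fin n} (W : (SimpleGraph.fromEdgeSet (↑T : Set (Sym2 (Fin n)))).Walk x y),
    (∀ p q : Fin n, s(p,q) ∈ W.edges → ((p - u).val ≤ r ↔ (q - u).val ≤ r)) →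
    (x - u).val ≤ r → ∀ z ∈ W.support, (z - u).val ≤ r := by
  intro x y W
  induction W with
  | nil => intro _ hx z hz; simp at hz; subst hz; exact hx
  | @cons p₁ p₂ p₃ hadj W' ih =>
    intro hcr hx z hz
    rw [SimpleGraph.Walk.support_cons] at hz
    rcases List.mem_cons.mp hz with rfl | hz'
    · exact hx
    · have hb : (p₂ - u).val ≤ r := by
        have := hcr p₁ p₂ (by rw [SimpleGraph.Walk.edges_cons]; exact List.mem_cons_self)
        omega
      exact ih (fun p q hpq => hcr p q
        (by rw [SimpleGraph.Walk.edges_cons]; exact List.mem_cons_of_mem _ hpq)) hb z hz'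

lemma level_walk {T : Finset (Sym2 (Fin n))} (hn : 2 ≤ n) {i a b : Fin n}
    (hiT : s(i, i + 1) ∉ T)
    (hba : (b - (i+1)).val ≤ (a - (i+1)).val) :
    ∀ {x y : Fin n} (W : (SimpleGraph.fromEdgeSet (↑T : Set (Sym2 (Fin n)))).Walk x y)
    (_ : ∀ f ∈ W.edges, IsBorderEdge f ∨ f = s(a,b))
    {j : ℕ} (_ : j < (b - (i+1)).val ∨ (a - (i+1)).val ≤ j)
    (_ : (y - (i+1)).val ≤ j) (_ : j < (x - (i+1)).val),
    ∃ p : Fin n, (p - (i+1)).val = j ∧ s(p, p+1) ∈ W.edges := by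
  intro x y W
  induction W with
  | nil => intro _ j hj hy hx; omega
  | @cons p₁ p₂ p₃ hadj W' ih =>
    intro hall j hj hy hx
    have hmem := mem_of_adj hadj
    have hfirst : IsBorderEdge (s(p₁,p₂) : Sym2 (Fin n)) ∨ s(p₁,p₂) = s(a,b) :=
      hall _ (by rw [SimpleGraph.Walk.edges_cons]; exact List.mem_cons_self)
    have hall' : ∀ f ∈ W'.edges, IsBorderEdge f ∨ f = s(a,b) := fun f hf =>
      hall f (by rw [SimpleGraph.Walk.edges_cons]; exact List.mem_cons_of_mem _ hf)
    rcases hfirst with hbord | hjump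
    · rcases (border_iff hn).mp hbord with h1 | h1
      · -- p₂ = p₁ + 1
        have hwrap : (p₁ - (i+1)).val ≠ n - 1 := by
          intro hc
          have h2 := dd_eq_last hn hc  -- p₁ + 1 = i + 1
          have hp1 : p₁ = i := add_right_cancel h2
          apply hiT
          have h3 : s(p₁, p₂) = s(i, i + 1) := by rw [h1, hp1]
          exact h3 ▸ hmem.1
        have hsucc : (p₂ - (i+1)).val = (p₁ - (i+1)).val + 1 := by
          rw [h1]; exact dd_succ hn hwrap
        obtain ⟨p, hp1, hp2⟩ := ih hall' hj hy (by omega)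
        exact ⟨p, hp1, by rw [SimpleGraph.Walk.edges_cons]; exact List.mem_cons_of_mem _ hp2⟩
      · -- p₁ = p₂ + 1
        have hwrap : (p₂ - (i+1)).val ≠ n - 1 := by
          intro hc
          have h2 := dd_eq_last hn hc  -- p₂ + 1 = i + 1
          have hp2i : p₂ = i := add_right_cancel h2
          apply hiT
          have : s(p₁, p₂) = s(i, i+1) := by
            rw [hp2i] at h1
            rw [h1, hp2i, Sym2.eq_swap]
          rw [← this]; exact hmem.1
        have hsucc : (p₁ - (i+1)).val = (p₂ - (i+1)).val + 1 := by
          rw [h1]; exact dd_succ hn hwrap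
        by_cases hje : j = (p₂ - (i+1)).val
        · refine ⟨p₂, hje.symm, ?_⟩
          rw [SimpleGraph.Walk.edges_cons]
          have : s(p₂, p₂ + 1) = s(p₁, p₂) := by rw [← h1, Sym2.eq_swap]
          rw [this]
          exact List.mem_cons_self
        · obtain ⟨p, hp1, hp2⟩ := ih hall' hj hy (by omega)
          exact ⟨p, hp1, by rw [SimpleGraph.Walk.edges_cons]; exact List.mem_cons_of_mem _ hp2⟩
    · -- jump edge
      rcases Sym2.eq_iff.mp hjump with ⟨h1, h2⟩ | ⟨h1, h2⟩
      · -- p₁ = a, p₂ = b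
        rcases Nat.lt_or_ge j ((p₂ - (i+1)).val) with hlt | hge
        · obtain ⟨p, hp1, hp2⟩ := ih hall' hj hy hlt
          exact ⟨p, hp1, by rw [SimpleGraph.Walk.edges_cons]; exact List.mem_cons_of_mem _ hp2⟩
        · exfalso; rw [h1] at hx; rw [h2] at hge; omega
      · -- p₁ = b, p₂ = a
        rcases Nat.lt_or_ge j ((p₂ - (i+1)).val) with hlt | hge
        · obtain ⟨p, hp1, hp2⟩ := ih hall' hj hy hlt
          exact ⟨p, hp1, by rw [SimpleGraph.Walk.edges_cons]; exact List.mem_cons_of_mem _ hp2⟩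
        · exfalso; rw [h1] at hx; rw [h2] at hge; omega

lemma ne_succ_self (hn : 2 ≤ n) (i : Fin n) : i ≠ i + 1 := by
  intro h
  have h1 : (1 : Fin n) = 0 := by
    have := left_eq_add.mp h
    exact this
  have := congrArg Fin.val h1
  rw [Fin.val_one', Fin.val_zero, Nat.mod_eq_of_lt hn] at this
  omega

lemma new_ncst {T : Finset (Sym2 (Fin n))} (hn : 2 ≤ n) (hT : IsNCST n T) {i : Fin n}
    (hiT : s(i, i + 1) ∉ T)
    (W : (SimpleGraph.fromEdgeSet (↑T : Set (Sym2 (Fin n)))).Walk i (i + 1)) (hW : W.IsPath)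
    {e : Sym2 (Fin n)} (he : e ∈ W.edges) :
    IsNCST n (insert s(i, i + 1) (T.erase e)) := by
  have hii : i ≠ i + 1 := ne_succ_self hn i
  have heT : e ∈ T := (edge_mem_of_walk he).1
  have hbord : IsBorderEdge (s(i, i+1) : Sym2 (Fin n)) := (border_iff hn).mpr (Or.inl rfl)
  refine ⟨?_, ?_, ?_, ?_⟩
  · intro f hf
    rcases Finset.mem_insert.mp hf with rfl | hf'
    · rw [Sym2.mk_isDiag_iff]; exact hii
    · exact hT.1 f (Finset.mem_of_mem_erase hf')
  · rw [Finset.card_insert_of_notMem (fun h => hiT (Finset.mem_of_mem_erase h)),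
      Finset.card_erase_of_mem heT]
    have h1 := hT.2.1
    have h2 : 1 ≤ T.card := Finset.card_pos.mpr ⟨e, heT⟩
    omega
  · exact swap_connected hT.2.2.1 hii W hW he
  · intro f hf g hg
    rcases Finset.mem_insert.mp hf with rfl | hf'
    · exact not_crosses_border_left hn hbord
    · rcases Finset.mem_insert.mp hg with rfl | hg'
      · exact not_crosses_border_right hn hbord
      · exact hT.2.2.2 f (Finset.mem_of_mem_erase hf') g (Finset.mem_of_mem_erase hg')

lemma confined_path {T : Finset (Sym2 (Fin n))} (hT : IsNCST n T) {u v x y : Fin n}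
    (huv : s(u,v) ∈ T) (hx : (x - u).val ≤ (v - u).val) (hy : (y - u).val ≤ (v - u).val) :
    ∃ Q : (SimpleGraph.fromEdgeSet (↑T : Set (Sym2 (Fin n)))).Walk x y,
      Q.IsPath ∧ ∀ z ∈ Q.support, (z - u).val ≤ (v - u).val := by
  obtain ⟨W⟩ := hT.2.2.1.preconnected x y
  obtain ⟨W', hW'⟩ := confine hT huv W.length W le_rfl hx hy
  exact ⟨W'.bypass, SimpleGraph.Walk.bypass_isPath W',
    fun z hz => hW' z (SimpleGraph.Walk.support_bypass_subset W' hz)⟩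

lemma cross_edge' {T : Finset (Sym2 (Fin n))} {u : Fin n} {K : ℕ} {x y : Fin n}
    (W : (SimpleGraph.fromEdgeSet (↑T : Set (Sym2 (Fin n)))).Walk x y)
    (hx : (x - u).val ≤ K) (hy : K < (y - u).val) :
    ∃ p q : Fin n, s(p,q) ∈ W.edges ∧ (q - u).val ≤ K ∧ K < (p - u).val := by
  obtain ⟨p, q, hpq, h1, h2⟩ := cross_edge W.reverse hx hy
  rw [SimpleGraph.Walk.edges_reverse, List.mem_reverse] at hpq
  exact ⟨p, q, hpq, h1, h2⟩

/-- A crossing edge over a missing border pair `(h₀, h₀+1)` inside the side of `uv`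
is a legitimate chord witness. -/
lemma chord_witness {T₂ : Finset (Sym2 (Fin n))} {u v p q h₀ : Fin n} {A : Finset (Fin n)}
    (hn : 2 ≤ n) (hm2 : (v - u).val ≤ n - 2) (hss : sideOf u v ⊂ A)
    (hpqT : s(p,q) ∈ T₂) (hh : s(h₀, h₀ + 1) ∉ T₂)
    (hq : (q - u).val ≤ (h₀ - u).val) (hp : (h₀ - u).val < (p - u).val)
    (hpm : (p - u).val ≤ (v - u).val)
    (hsucc : (h₀ + 1 - u).val = (h₀ - u).val + 1) :
    ¬ IsBorderEdge (s(q,p) : Sym2 (Fin n)) ∧ sideOf q p ⊂ A ∧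
      h₀ ∈ sideOf q p ∧ h₀ + 1 ∈ sideOf q p ∧
      (p - q).val = (p - u).val - (q - u).val := by
  have hK := dd_lt h₀ u
  have hm := dd_lt v u
  have hdpq : (p - q).val = (p - u).val - (q - u).val := dd_sub (by omega)
  refine ⟨?_, ?_, ?_, ?_, hdpq⟩
  · intro hbord
    rcases (border_iff hn).mp hbord with h1 | h1
    · -- p = q + 1
      have hwrap : (q - u).val ≠ n - 1 := by omega
      have h2 : (p - u).val = (q - u).val + 1 := by rw [h1]; exact dd_succ hn hwrap
      have hqh : (q - u).val = (h₀ - u).val := by omega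
      have hq0 : q = h₀ := dd_right_cancel hqh
      apply hh
      have h3 : s(h₀, h₀ + 1) = s(q, p) := by rw [h1, hq0]
      rw [h3, Sym2.eq_swap]; exact hpqT
    · -- q = p + 1
      have hwrap : (p - u).val ≠ n - 1 := by omega
      have h2 : (q - u).val = (p - u).val + 1 := by rw [h1]; exact dd_succ hn hwrap
      omega
  · refine _root_.ssubset_of_subset_of_ssubset ?_ hss
    intro x hx
    rw [mem_sideOf] at hx ⊢
    rw [hdpq] at hx
    have h3 : (x - u).val = (q - u).val + (x - q).val := dd_add (by omega)
    omega
  · rw [mem_sideOf, hdpq]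
    have h3 : (h₀ - q).val = (h₀ - u).val - (q - u).val := dd_sub (by omega)
    omega
  · rw [mem_sideOf, hdpq]
    have h3 : (h₀ + 1 - q).val = (h₀ + 1 - u).val - (q - u).val := dd_sub (by omega)
    omega


end Main
end Aux

/-- Filling a bad hole: given a nice pair `T₁, T₂`, a chord `ab` of `T₁` whose
side `A` contains at least two holes, one of them a bad hole `(i, i+1)` w.r.t.
`T₂`, the hole can be filled in `T₁` by flipping a chord `e₁ ≠ ab` and in `T₂`
by flipping a chord `e₂` with both endpoints in `A`; the resulting trees are
again non-crossing spanning trees forming a nice pair, and `A` has one fewer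
bad hole. -/
theorem fill_bad_hole (n : ℕ) (T₁ T₂ : Finset (Sym2 (Fin n)))
    (hnice : NicePair n T₁ T₂) (a b : Fin n)
    (he : s(a, b) ∈ T₁) (hchord : ¬ IsBorderEdge s(a, b))
    (hholes : 2 ≤ (holesIn n T₁ (sideOf a b)).card)
    (i : Fin n) (hbad : i ∈ badHolesIn n T₁ T₂ (sideOf a b)) :
    ∃ e₁ ∈ T₁, ∃ e₂ ∈ T₂,
      ¬ IsBorderEdge e₁ ∧ e₁ ≠ s(a, b) ∧
      ¬ IsBorderEdge e₂ ∧ (∀ v ∈ e₂, v ∈ sideOf a b) ∧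
      IsNCST n (insert s(i, nextIdx i) (T₁.erase e₁)) ∧
      IsNCST n (insert s(i, nextIdx i) (T₂.erase e₂)) ∧
      NicePair n (insert s(i, nextIdx i) (T₁.erase e₁))
        (insert s(i, nextIdx i) (T₂.erase e₂)) ∧
      (badHolesIn n (insert s(i, nextIdx i) (T₁.erase e₁))
          (insert s(i, nextIdx i) (T₂.erase e₂)) (sideOf a b)).card
        = (badHolesIn n T₁ T₂ (sideOf a b)).card - 1 := by
  classical
  haveI : NeZero n := ⟨by have := i.pos; omega⟩
  have hbadcopy := hbad
  obtain ⟨hT₁, hT₂, hborder, hcommon⟩ := hnice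
  -- basic facts about a, b
  have hab : a ≠ b := by
    intro h; exact hT₁.1 _ he (by rw [h]; exact Sym2.mk_isDiag_iff.mpr rfl)
  have hn2 : 2 ≤ n := by
    by_contra hlt
    push_neg at hlt
    have h1 : n = 1 := by have := i.pos; omega
    apply hab; apply Fin.ext
    have ha := a.isLt; have hb := b.isLt; omega
  have hba1 : b ≠ a + 1 ∧ a ≠ b + 1 := by
    constructor <;> intro h <;> exact hchord ((Aux.border_iff hn2).mpr (by tauto))
  have hB0 : (b - a).val ≠ 0 := fun h => hab (Aux.dd_eq_zero_iff.mp h).symm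
  have hB1 : (b - a).val ≠ 1 := by
    intro h
    apply hba1.1
    have h2 : ((a + 1) - a).val = 1 := by
      have h0 : (a - a).val ≠ n - 1 := by rw [Aux.dd_self]; omega
      rw [Aux.dd_succ hn2 h0, Aux.dd_self]
    exact Aux.dd_right_cancel (h.trans h2.symm)
  have hBn1 : (b - a).val ≠ n - 1 := fun h => hba1.2 (Aux.dd_eq_last hn2 h).symm
  have hBlt : (b - a).val < n := Aux.dd_lt b a
  have hn4 : 4 ≤ n := by omega
  -- unpack the bad hole i
  rw [badHolesIn, Finset.mem_filter] at hbad
  obtain ⟨hihole, c, d, hcdT₂, hcdch, hcdss, hicd, hi'cd⟩ := hbad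
  rw [holesIn, Finset.mem_filter] at hihole
  obtain ⟨-, hiT₁, hiA, hi'A⟩ := hihole
  rw [Aux.nextIdx_eq] at hiT₁ hi'A hi'cd ⊢
  have hiT₂ : s(i, i + 1) ∉ T₂ := fun h =>
    hiT₁ ((hborder _ ⟨i, by rw [Aux.nextIdx_eq]⟩).mpr h)
  have hiA' : (i - a).val ≤ (b - a).val := Aux.mem_sideOf.mp hiA
  have hi'A' : (i + 1 - a).val ≤ (b - a).val := Aux.mem_sideOf.mp hi'A
  have hk₁succ : (i + 1 - a).val = (i - a).val + 1 := Aux.dd_succ hn2 (by omega)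
  have hiI : i ≠ i + 1 := Aux.ne_succ_self hn2 i
  -- choose the minimal witness chord (u,v) for the hole i
  set Wit := Finset.filter (fun p : Fin n × Fin n => s(p.1, p.2) ∈ T₂ ∧
      ¬ IsBorderEdge s(p.1, p.2) ∧ sideOf p.1 p.2 ⊂ sideOf a b ∧
      i ∈ sideOf p.1 p.2 ∧ i + 1 ∈ sideOf p.1 p.2) Finset.univ with hWit
  have hWitne : Wit.Nonempty := by
    refine ⟨(c, d), ?_⟩
    rw [hWit, Finset.mem_filter]
    exact ⟨Finset.mem_univ _, hcdT₂, hcdch, hcdss, hicd, hi'cd⟩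
  obtain ⟨⟨u, v⟩, huvW, hmin⟩ := Finset.exists_min_image Wit (fun p => (p.2 - p.1).val) hWitne
  rw [hWit, Finset.mem_filter] at huvW
  obtain ⟨-, huvT₂, huvch, huvss, hiuv, hi'uv⟩ := huvW
  dsimp only at hmin huvT₂ huvch huvss hiuv hi'uv
  have hminE : ∀ p q : Fin n, s(p, q) ∈ T₂ → ¬ IsBorderEdge s(p, q) →
      sideOf p q ⊂ sideOf a b → i ∈ sideOf p q → i + 1 ∈ sideOf p q →
      (v - u).val ≤ (q - p).val := by
    intro p q h1 h2 h3 h4 h5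
    apply hmin (p, q)
    rw [hWit, Finset.mem_filter]
    exact ⟨Finset.mem_univ _, h1, h2, h3, h4, h5⟩
  have huvne : u ≠ v := by
    intro h; exact hT₂.1 _ huvT₂ (by rw [h]; exact Sym2.mk_isDiag_iff.mpr rfl)
  have hm0 : (v - u).val ≠ 0 := fun h => huvne (Aux.dd_eq_zero_iff.mp h).symm
  have hm2 : (v - u).val ≤ n - 2 := by
    by_contra hc
    have hmeq : sideOf u v = Finset.univ := Finset.eq_univ_iff_forall.mpr
      (fun x => Aux.mem_sideOf.mpr (by have h1 := Aux.dd_lt x u; have h2 := Aux.dd_lt v u; omega))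
    rw [hmeq] at huvss
    exact huvss.2 (Finset.subset_univ _)
  have hk : (i - u).val ≤ (v - u).val := Aux.mem_sideOf.mp hiuv
  have hk1 : (i + 1 - u).val = (i - u).val + 1 := Aux.dd_succ hn2 (by omega)
  have hk1m : (i - u).val + 1 ≤ (v - u).val := by
    have := Aux.mem_sideOf.mp hi'uv; omega
  -- confined path in T₂ through the hole i, containing s(u,v)
  obtain ⟨P, hPpath, hPconf⟩ := Aux.confined_path hT₂ huvT₂ (x := i) (y := i + 1) hk (by omega)
  obtain ⟨p, q, hpqP, hq, hp⟩ := Aux.cross_edge' P (K := (i - u).val) le_rfl (by omega)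
  have hpm : (p - u).val ≤ (v - u).val :=
    hPconf p (SimpleGraph.Walk.fst_mem_support_of_mem_edges P hpqP)
  have hpqT₂ : s(p, q) ∈ T₂ := (Aux.edge_mem_of_walk hpqP).1
  obtain ⟨hch0, hss0, hmi0, hmi0', hval0⟩ :=
    Aux.chord_witness hn2 hm2 huvss hpqT₂ hiT₂ hq hp hpm hk1
  have hmin0 := hminE q p (by rw [Sym2.eq_swap]; exact hpqT₂) hch0 hss0 hmi0 hmi0'
  have hq0 : (q - u).val = 0 := by omega
  have hqu : q = u := Aux.dd_eq_zero_iff.mp hq0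
  have hpv : p = v := Aux.dd_right_cancel (show (p - u).val = (v - u).val by omega)
  have he₂P : s(u, v) ∈ P.edges := by
    rw [show (s(u,v) : Sym2 (Fin n)) = s(p,q) by rw [hqu, hpv, Sym2.eq_swap]]
    exact hpqP
  have hT₂' : IsNCST n (insert s(i, i + 1) (T₂.erase s(u, v))) :=
    Aux.new_ncst hn2 hT₂ hiT₂ P hPpath he₂P
  -- choose e₁ in T₁
  obtain ⟨W1⟩ := hT₁.2.2.1.preconnected i (i + 1)
  set P₁ := W1.bypass with hP₁def
  have hP₁path : P₁.IsPath := SimpleGraph.Walk.bypass_isPath W1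
  have hex : ∃ f ∈ P₁.edges, ¬ IsBorderEdge f ∧ f ≠ s(a, b) := by
    by_contra hc
    push_neg at hc
    have hall : ∀ f ∈ P₁.edges, IsBorderEdge f ∨ f = s(a, b) := by
      intro f hf
      by_cases hb : IsBorderEdge f
      · exact Or.inl hb
      · exact Or.inr (hc f hf hb)
    have hi'a : i + 1 ≠ a := by
      intro h
      rw [h] at hk₁succ
      rw [Aux.dd_self] at hk₁succ
      omega
    have hai' : (a - (i + 1)).val = n - ((i - a).val + 1) := by
      have h1 := Aux.dd_add_dd hi'a
      rw [hk₁succ] at h1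
      omega
    have hbi' : (b - (i + 1)).val = (b - a).val - ((i - a).val + 1) := by
      have h1 := Aux.dd_sub (x := a) (y := i + 1) (z := b) (by omega)
      rw [hk₁succ] at h1
      exact h1
    obtain ⟨t, htmem, hti⟩ :=
      Finset.exists_mem_ne (by omega : 1 < (holesIn n T₁ (sideOf a b)).card) i
    rw [holesIn, Finset.mem_filter] at htmem
    obtain ⟨-, htT₁, htA, ht'A⟩ := htmem
    rw [Aux.nextIdx_eq] at htT₁ ht'A
    have hst : (t - a).val ≤ (b - a).val := Aux.mem_sideOf.mp htA
    have hst' : (t + 1 - a).val ≤ (b - a).val := Aux.mem_sideOf.mp ht'A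
    have hstsucc : (t + 1 - a).val = (t - a).val + 1 := Aux.dd_succ hn2 (by omega)
    have hii'n : (i - (i + 1)).val = n - 1 := by
      have h0 : (i - i).val ≠ n - 1 := by rw [Aux.dd_self]; omega
      have h1 : ((i + 1) - i).val = 1 := by rw [Aux.dd_succ hn2 h0, Aux.dd_self]
      have h2 := Aux.dd_add_dd hiI
      omega
    have hjrange : (t - (i + 1)).val < (b - (i + 1)).val ∨
        (a - (i + 1)).val ≤ (t - (i + 1)).val := by
      rcases Nat.lt_or_ge (t - a).val ((i - a).val + 1) with hlt | hge
      · right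
        have htne : t ≠ i + 1 := by
          intro h
          rw [h, hk₁succ] at hlt
          omega
        have h1 : ((i + 1) - t).val = ((i - a).val + 1) - (t - a).val := by
          have := Aux.dd_sub (x := a) (y := t) (z := i + 1) (by omega)
          rw [hk₁succ] at this
          exact this
        have h2 := Aux.dd_add_dd htne
        rw [hai']
        omega
      · left
        have h1 : (t - (i + 1)).val = (t - a).val - ((i - a).val + 1) := by
          have := Aux.dd_sub (x := a) (y := i + 1) (z := t) (by omega)
          rw [hk₁succ] at this
          exact this
        have htb : (t - a).val ≠ (b - a).val := by
          intro h
          have ht_b : t = b := Aux.dd_right_cancel h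
          rw [ht_b] at hstsucc hst'
          omega
        rw [hbi']
        omega
    have hjy : ((i + 1) - (i + 1)).val ≤ (t - (i + 1)).val := by
      rw [Aux.dd_self]; omega
    have hjx : (t - (i + 1)).val < (i - (i + 1)).val := by
      rw [hii'n]
      have hlt := Aux.dd_lt t (i + 1)
      have hne : (t - (i + 1)).val ≠ n - 1 := by
        intro hcon
        exact hti (Aux.dd_right_cancel (hcon.trans hii'n.symm))
      omega
    obtain ⟨p₀, hp₀, hp₀e⟩ := Aux.level_walk hn2 hiT₁ (by rw [hai', hbi']; omega)
      P₁ hall hjrange hjy hjx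
    have hp₀t : p₀ = t := Aux.dd_right_cancel hp₀
    rw [hp₀t] at hp₀e
    exact htT₁ (Aux.edge_mem_of_walk hp₀e).1
  obtain ⟨e₁, he₁P, he₁ch, he₁ab⟩ := hex
  have he₁T₁ : e₁ ∈ T₁ := (Aux.edge_mem_of_walk he₁P).1
  have hT₁' : IsNCST n (insert s(i, i + 1) (T₁.erase e₁)) :=
    Aux.new_ncst hn2 hT₁ hiT₁ P₁ hP₁path he₁P
  -- the new pair is nice
  have hnewbord : IsBorderEdge (s(i, i + 1) : Sym2 (Fin n)) := ⟨i, by rw [Aux.nextIdx_eq]⟩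
  have hnice' : NicePair n (insert s(i, i + 1) (T₁.erase e₁))
      (insert s(i, i + 1) (T₂.erase s(u, v))) := by
    refine ⟨hT₁', hT₂', ?_, ?_⟩
    · intro e hbe
      have hne₁ : e ≠ e₁ := fun h => he₁ch (h ▸ hbe)
      have hne₂ : e ≠ s(u, v) := fun h => huvch (h ▸ hbe)
      constructor
      · intro h
        rcases Finset.mem_insert.mp h with rfl | h1
        · exact Finset.mem_insert_self _ _
        · exact Finset.mem_insert_of_mem (Finset.mem_erase.mpr
            ⟨hne₂, (hborder e hbe).mp (Finset.mem_of_mem_erase h1)⟩)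
      · intro h
        rcases Finset.mem_insert.mp h with rfl | h1
        · exact Finset.mem_insert_self _ _
        · exact Finset.mem_insert_of_mem (Finset.mem_erase.mpr
            ⟨hne₁, (hborder e hbe).mpr (Finset.mem_of_mem_erase h1)⟩)
    · intro e h1 h2
      rcases Finset.mem_insert.mp h1 with rfl | h1'
      · exact hnewbord
      · rcases Finset.mem_insert.mp h2 with rfl | h2'
        · exact hnewbord
        · exact hcommon e (Finset.mem_of_mem_erase h1') (Finset.mem_of_mem_erase h2')
  -- bad hole count
  have hkey : badHolesIn n (insert s(i, i + 1) (T₁.erase e₁))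
      (insert s(i, i + 1) (T₂.erase s(u, v))) (sideOf a b)
      = (badHolesIn n T₁ T₂ (sideOf a b)).erase i := by
    apply Finset.ext
    intro t
    constructor
    · intro ht
      rw [badHolesIn, Finset.mem_filter] at ht
      obtain ⟨hth, c', d', hw1, hw2, hw3, hw4, hw5⟩ := ht
      rw [holesIn, Finset.mem_filter] at hth
      obtain ⟨-, ht1, ht2, ht3⟩ := hth
      rw [Aux.nextIdx_eq] at ht1 ht3 hw5
      have htne : t ≠ i := by
        intro h
        exact ht1 (by rw [h]; exact Finset.mem_insert_self _ _)
      have ht1' : s(t, t + 1) ∉ T₁ := by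
        intro hmem
        apply ht1
        refine Finset.mem_insert_of_mem (Finset.mem_erase.mpr ⟨?_, hmem⟩)
        intro hcon
        exact he₁ch (hcon ▸ ⟨t, by rw [Aux.nextIdx_eq]⟩)
      have hw1' : s(c', d') ∈ T₂ := by
        rcases Finset.mem_insert.mp hw1 with heq | h1
        · exact absurd (heq ▸ hnewbord) hw2
        · exact Finset.mem_of_mem_erase h1
      rw [Finset.mem_erase]
      refine ⟨htne, ?_⟩
      rw [badHolesIn, Finset.mem_filter]
      constructor
      · rw [holesIn, Finset.mem_filter]
        exact ⟨Finset.mem_univ _, by rw [Aux.nextIdx_eq]; exact ht1', ht2,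
          by rw [Aux.nextIdx_eq]; exact ht3⟩
      · exact ⟨c', d', hw1', hw2, hw3, hw4, by rw [Aux.nextIdx_eq]; exact hw5⟩
    · intro ht
      rw [Finset.mem_erase] at ht
      obtain ⟨htne, htB⟩ := ht
      rw [badHolesIn, Finset.mem_filter] at htB
      obtain ⟨hth, c₀, d₀, h1, h2, h3, h4, h5⟩ := htB
      rw [holesIn, Finset.mem_filter] at hth
      obtain ⟨-, ht1, ht2, ht3⟩ := hth
      rw [Aux.nextIdx_eq] at ht1 ht3 h5
      rw [badHolesIn, Finset.mem_filter]
      have htT₂ : s(t, t + 1) ∉ T₂ := fun hmem =>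
        ht1 ((hborder _ ⟨t, by rw [Aux.nextIdx_eq]⟩).mpr hmem)
      constructor
      · -- t is still a hole of the new T₁
        rw [holesIn, Finset.mem_filter]
        refine ⟨Finset.mem_univ _, ?_, ht2, by rw [Aux.nextIdx_eq]; exact ht3⟩
        rw [Aux.nextIdx_eq]
        intro hmem
        rcases Finset.mem_insert.mp hmem with heq | h1'
        · rcases Sym2.eq_iff.mp heq with ⟨h6, h7⟩ | ⟨h6, h7⟩
          · exact htne h6
          · -- t = i + 1 and t + 1 = i : impossible since n ≥ 4
            have h8 : (t + 1 - (i + 1)).val = 1 := by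
              rw [h6]
              have h0 : ((i + 1) - (i + 1)).val ≠ n - 1 := by rw [Aux.dd_self]; omega
              rw [Aux.dd_succ hn2 h0, Aux.dd_self]
            have h9 : (t + 1 - (i + 1)).val = n - 1 := by
              rw [h7]
              have h0 : (i - i).val ≠ n - 1 := by rw [Aux.dd_self]; omega
              have hA : ((i + 1) - i).val = 1 := by rw [Aux.dd_succ hn2 h0, Aux.dd_self]
              have hB := Aux.dd_add_dd hiI
              omega
            omega
        · exact ht1 (Finset.mem_of_mem_erase h1')
      · -- a surviving witness chord
        by_cases hc₀ : s(c₀, d₀) = s(u, v)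
        · rcases Sym2.eq_iff.mp hc₀ with ⟨hcu, hdv⟩ | ⟨hcv, hdu⟩
          · -- c₀ = u, d₀ = v : main case
            rw [hcu, hdv] at h4 h5
            have hr : (t - u).val ≤ (v - u).val := Aux.mem_sideOf.mp h4
            have hrsucc : (t + 1 - u).val = (t - u).val + 1 := Aux.dd_succ hn2 (by omega)
            have hr1 : (t - u).val + 1 ≤ (v - u).val := by
              have := Aux.mem_sideOf.mp h5; omega
            have hrk : (t - u).val ≠ (i - u).val := fun h => htne (Aux.dd_right_cancel h)
            obtain ⟨Q, hQpath, hQconf⟩ :=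
              Aux.confined_path hT₂ huvT₂ (x := t) (y := t + 1) hr (by omega)
            by_cases H : ∃ p' q' : Fin n, s(p', q') ∈ Q.edges ∧
                (q' - u).val ≤ (t - u).val ∧ (t - u).val < (p' - u).val ∧ s(p', q') ≠ s(u, v)
            · obtain ⟨p', q', hpq', hq', hp', hne'⟩ := H
              have hp'm : (p' - u).val ≤ (v - u).val :=
                hQconf _ (SimpleGraph.Walk.fst_mem_support_of_mem_edges Q hpq')
              have hpq'T₂ : s(p', q') ∈ T₂ := (Aux.edge_mem_of_walk hpq').1
              obtain ⟨hchW, hssW, hm1W, hm2W, hvalW⟩ :=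
                Aux.chord_witness hn2 hm2 huvss hpq'T₂ htT₂ hq' hp' hp'm hrsucc
              refine ⟨q', p', ?_, hchW, hssW, hm1W, by rw [Aux.nextIdx_eq]; exact hm2W⟩
              refine Finset.mem_insert_of_mem (Finset.mem_erase.mpr
                ⟨?_, by rw [Sym2.eq_swap]; exact hpq'T₂⟩)
              intro hcon
              exact hne' ((Sym2.eq_swap).trans hcon)
            · exfalso
              push_neg at H
              obtain ⟨pP, qP, hPQ, hqP, hpP⟩ :=
                Aux.cross_edge' Q (K := (t - u).val) le_rfl (by omega)
              have heQ : s(u, v) ∈ Q.edges := by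
                have h6 := H pP qP hPQ hqP hpP
                rw [← h6]; exact hPQ
              obtain ⟨x₁, x₂, hadj₁₂, Q₁, Q₂, heq₁₂, hQeq⟩ := Aux.walk_split Q heQ
              have hed : Q.edges = Q₁.edges ++ s(x₁, x₂) :: Q₂.edges := by
                rw [hQeq, SimpleGraph.Walk.edges_append, SimpleGraph.Walk.edges_cons]
              have hnd := hQpath.edges_nodup
              rw [hed, List.nodup_append] at hnd
              have huv₁ : s(u, v) ∉ Q₁.edges := by
                intro hcon
                exact hnd.2.2 _ hcon _ (by rw [heq₁₂]; exact List.mem_cons_self) rfl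
              have hsup : Q.support = Q₁.support ++ Q₂.support := by
                rw [hQeq, SimpleGraph.Walk.support_append, SimpleGraph.Walk.support_cons]
                rfl
              have hsnd := hQpath.support_nodup
              rw [hsup, List.nodup_append] at hsnd
              have hlow : ∀ z ∈ Q₁.support, (z - u).val ≤ (t - u).val := by
                apply Aux.low_stay Q₁ ?_ le_rfl
                intro p' q' hpq'
                have hpq'Q : s(p', q') ∈ Q.edges := by
                  rw [hed]; exact List.mem_append_left _ hpq'
                constructor
                · intro hple
                  by_contra hqgt
                  push_neg at hqgt
                  have h6 := H q' p' (by rw [Sym2.eq_swap]; exact hpq'Q) hple hqgt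
                  have h7 : s(p', q') = s(u, v) := (Sym2.eq_swap).trans h6
                  exact absurd (h7 ▸ hpq') huv₁
                · intro hqle
                  by_contra hpgt
                  push_neg at hpgt
                  have h6 := H p' q' hpq'Q hqle hpgt
                  exact absurd (h6 ▸ hpq') huv₁
              have hx₁low : (x₁ - u).val ≤ (t - u).val :=
                hlow x₁ (SimpleGraph.Walk.end_mem_support Q₁)
              have hx₁x₂ : x₁ = u ∧ x₂ = v := by
                rcases Sym2.eq_iff.mp heq₁₂ with ⟨h6, h7⟩ | ⟨h6, h7⟩
                · exact ⟨h6.symm, h7.symm⟩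
                · exfalso
                  rw [← h7] at hx₁low
                  omega
              obtain ⟨hx₁u, hx₂v⟩ := hx₁x₂
              rcases Nat.lt_or_ge (t - u).val (i - u).val with hrklt | hrkge
              · -- r < k : cross Q₂ from v down past the hole i
                obtain ⟨p', q', hpq₂, hq'k, hp'k⟩ := Aux.cross_edge (K := (i - u).val) Q₂
                  (by rw [hrsucc]; omega) (by rw [hx₂v]; omega)
                have hp'supp : p' ∈ Q₂.support :=
                  SimpleGraph.Walk.fst_mem_support_of_mem_edges Q₂ hpq₂
                have hq'supp : q' ∈ Q₂.support :=
                  SimpleGraph.Walk.snd_mem_support_of_mem_edges Q₂ hpq₂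
                have hq'u : q' ≠ u := by
                  intro h6
                  exact hsnd.2.2 _ (show u ∈ Q₁.support from hx₁u ▸ SimpleGraph.Walk.end_mem_support Q₁)
                    _ (show u ∈ Q₂.support from h6 ▸ hq'supp) rfl
                have hp'm : (p' - u).val ≤ (v - u).val := by
                  apply hQconf
                  rw [hsup]
                  exact List.mem_append_right _ hp'supp
                have hpq₂T : s(p', q') ∈ T₂ := (Aux.edge_mem_of_walk hpq₂).1
                obtain ⟨hchW, hssW, hm1W, hm2W, hvalW⟩ :=
                  Aux.chord_witness hn2 hm2 huvss hpq₂T hiT₂ hq'k hp'k hp'm hk1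
                have hminW := hminE q' p' (by rw [Sym2.eq_swap]; exact hpq₂T) hchW hssW hm1W hm2W
                have hq'0 : (q' - u).val ≠ 0 := fun h6 => hq'u (Aux.dd_eq_zero_iff.mp h6)
                omega
              · -- k < r : cross Q₁ from t down past the hole i
                have hrkgt : (i - u).val < (t - u).val := by omega
                obtain ⟨p', q', hpq₁, hq'k, hp'k⟩ := Aux.cross_edge (K := (i - u).val) Q₁
                  (by rw [hx₁u, Aux.dd_self]; omega) (by omega)
                have hp'r : (p' - u).val ≤ (t - u).val :=
                  hlow _ (SimpleGraph.Walk.fst_mem_support_of_mem_edges Q₁ hpq₁)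
                have hpq₁T : s(p', q') ∈ T₂ := (Aux.edge_mem_of_walk hpq₁).1
                obtain ⟨hchW, hssW, hm1W, hm2W, hvalW⟩ :=
                  Aux.chord_witness hn2 hm2 huvss hpq₁T hiT₂ hq'k hp'k (by omega) hk1
                have hminW := hminE q' p' (by rw [Sym2.eq_swap]; exact hpq₁T) hchW hssW hm1W hm2W
                omega
          · -- c₀ = v, d₀ = u : the "other side" is impossible
            exfalso
            rw [hcv, hdu] at h3
            have hall : ∀ x : Fin n, x ∈ sideOf a b := by
              intro x
              rcases le_or_gt (x - u).val (v - u).val with h6 | h6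
              · exact huvss.1 (Aux.mem_sideOf.mpr h6)
              · apply h3.1
                rw [Aux.mem_sideOf]
                have h7 : (x - v).val = (x - u).val - (v - u).val := Aux.dd_sub (by omega)
                have h8 := Aux.dd_add_dd huvne
                have h9 := Aux.dd_lt x u
                omega
            have hb1 : b + 1 ∈ sideOf a b := hall (b + 1)
            rw [Aux.mem_sideOf] at hb1
            have h6 : (b + 1 - a).val = (b - a).val + 1 := Aux.dd_succ hn2 (by omega)
            omega
        · -- the witness chord is untouched
          exact ⟨c₀, d₀, Finset.mem_insert_of_mem (Finset.mem_erase.mpr ⟨hc₀, h1⟩),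
            h2, h3, h4, by rw [Aux.nextIdx_eq]; exact h5⟩
  -- assemble
  refine ⟨e₁, he₁T₁, s(u, v), huvT₂, he₁ch, he₁ab, huvch, ?_, hT₁', hT₂', hnice', ?_⟩
  · intro z hz
    rcases Sym2.mem_iff.mp hz with rfl | rfl
    · exact huvss.1 (Aux.mem_sideOf.mpr (by rw [Aux.dd_self]; omega))
    · exact huvss.1 (Aux.mem_sideOf.mpr le_rfl)
  · rw [hkey, Finset.card_erase_of_mem hbadcopy]
end
end

section
/- Let T₁, T₂ be a nice pair of non-crossing spanning trees and let A be a very good side of a chord e of T₁ with respect to T₂ (A contains no chord of T₂ and the degree of A in T₂ is at most k_A). If P is an internal border path of A, then P is incident to at least 1 chord of T₂, and at most one internal border path of A is incident to 2 chords of T₂. -/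
open Finset

noncomputable section
attribute [local instance] Classical.propDecidable

/-- The predecessor of `i` in the cyclic order on `Fin n`. -/
def prevIdx {n : ℕ} (i : Fin n) : Fin n :=
  ⟨(i.val + (n - 1)) % n, Nat.mod_lt _ i.pos⟩

/-- The point `t` steps after `i` in the cyclic order. -/
def stepIdx {n : ℕ} (i : Fin n) (t : ℕ) : Fin n :=
  ⟨(i.val + t) % n, Nat.mod_lt _ i.pos⟩

/-- The points `i, i+1, …, i+m` form a (maximal) border path of `T`: all the
`m` border edges between them are in `T`, and the border edges just before `i`
and just after `i + m` are not. -/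
def IsBorderPathFrom (n : ℕ) (T : Finset (Sym2 (Fin n))) (i : Fin n) (m : ℕ) :
    Prop :=
  (∀ t < m, s(stepIdx i t, stepIdx i (t + 1)) ∈ T) ∧
  s(stepIdx i m, stepIdx i (m + 1)) ∉ T ∧
  s(prevIdx i, i) ∉ T

/-- An internal border path of the side `sideOf a b`: a border path all of
whose points lie in the side and which contains no endpoint of the chord
`ab`. -/
def InternalBorderPath (n : ℕ) (T : Finset (Sym2 (Fin n))) (a b : Fin n)
    (i : Fin n) (m : ℕ) : Prop :=
  IsBorderPathFrom n T i m ∧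
  ∀ t ≤ m, stepIdx i t ∈ sideOf a b ∧ stepIdx i t ≠ a ∧ stepIdx i t ≠ b

/-- The number of chords of `T'` incident to the border path starting at `i`
of length `m` (i.e. having an endpoint on the path). -/
def incChords (n : ℕ) (T' : Finset (Sym2 (Fin n))) (i : Fin n) (m : ℕ) : ℕ :=
  (T'.filter (fun e => ¬ IsBorderEdge e ∧ ∃ t ≤ m, stepIdx i t ∈ e)).card

/-- `sideOf a b` is a good side of the chord `ab ∈ T` w.r.t. `T'`: it contains
no chord of `T'`. -/
def GoodSide (n : ℕ) (T T' : Finset (Sym2 (Fin n))) (a b : Fin n) : Prop :=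
  s(a, b) ∈ T ∧ ¬ IsBorderEdge s(a, b) ∧
  ∀ e ∈ T', ¬ IsBorderEdge e → ¬ (∀ v ∈ e, v ∈ sideOf a b)

/-- A very good side: a good side whose degree in `T'` is at most its number
of holes. -/
def VeryGoodSide (n : ℕ) (T T' : Finset (Sym2 (Fin n))) (a b : Fin n) : Prop :=
  GoodSide n T T' a b ∧
  sideDegree n a b T' ≤ (holesIn n T (sideOf a b)).card

/-!
Positions on the side are measured as `(x - a).val`, the number of steps from `a`.

If no chord of `T₂` touched an internal border path `P`, every edge of `T₂` at a vertex of `P`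
would be a border edge; the border edges leaving `P` are holes of `T₁`, hence not edges of `T₂`,
so the vertex set of `P` would be closed under adjacency in `T₂` and, `T₂` being connected,
would contain `a`.

The internal border paths of `A` are the stretches between consecutive holes, so there are at
least `k_A - 1` of them. They are pairwise disjoint, so the chord endpoints they carry are distinct
and all count towards the degree of `A`. Each carries at least one, so two paths carrying two
chords each would push the degree to `k_A + 1`.
-/

lemma SimpleGraph.Connected.mem_of_forall_adj_mem {V : Type*} {G : SimpleGraph V}
    (hG : G.Connected) {s : Set V} (hs : ∀ u v, u ∈ s → G.Adj u v → v ∈ s) {u : V}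
    (hu : u ∈ s) (v : V) : v ∈ s := by
  obtain ⟨w⟩ := hG.preconnected u v
  induction w with
  | nil => exact hu
  | cons hadj _ ih => exact ih (hs _ _ hu hadj)

lemma card_add_two_le_sum {ι : Type*} {s : Finset ι} {f : ι → ℕ} (hf : ∀ x ∈ s, 1 ≤ f x)
    {i j : ι} (hi : i ∈ s) (hj : j ∈ s) (hij : i ≠ j) (hfi : 2 ≤ f i) (hfj : 2 ≤ f j) :
    s.card + 2 ≤ ∑ x ∈ s, f x := by
  have hj' : j ∈ s.erase i := Finset.mem_erase.2 ⟨hij.symm, hj⟩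
  have hrest : ((s.erase i).erase j).card • 1 ≤ ∑ x ∈ (s.erase i).erase j, f x :=
    Finset.card_nsmul_le_sum _ f 1 fun x hx =>
      hf x (Finset.mem_of_mem_erase (Finset.mem_of_mem_erase hx))
  have hcard := Finset.card_pos.2 ⟨j, hj'⟩
  rw [smul_eq_mul, mul_one, Finset.card_erase_of_mem hj'] at hrest
  rw [Finset.card_erase_of_mem hi] at hcard hrest
  rw [← Finset.add_sum_erase s f hi, ← Finset.add_sum_erase _ f hj']
  omega

section CyclicIndex

variable {n : ℕ}

lemma stepIdx_zero (i : Fin n) : stepIdx i 0 = i :=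
  Fin.ext (Nat.mod_eq_of_lt i.isLt)

lemma stepIdx_add (i : Fin n) (s t : ℕ) : stepIdx (stepIdx i s) t = stepIdx i (s + t) := by
  apply Fin.ext
  simp only [stepIdx, Nat.mod_add_mod, Nat.add_assoc]

lemma stepIdx_succ (i : Fin n) (t : ℕ) : stepIdx i (t + 1) = nextIdx (stepIdx i t) :=
  (stepIdx_add i t 1).symm

lemma stepIdx_self (i : Fin n) : stepIdx i n = i := by
  apply Fin.ext
  simp only [stepIdx, Nat.add_mod_right, Nat.mod_eq_of_lt i.isLt]

lemma prevIdx_stepIdx_succ (i : Fin n) (t : ℕ) : prevIdx (stepIdx i (t + 1)) = stepIdx i t := by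
  have := i.pos
  apply Fin.ext
  simp only [prevIdx, stepIdx, Nat.mod_add_mod]
  rw [show i.val + (t + 1) + (n - 1) = i.val + t + n by omega, Nat.add_mod_right]

lemma prevIdx_nextIdx (x : Fin n) : prevIdx (nextIdx x) = x := by
  have h := prevIdx_stepIdx_succ x 0
  rwa [stepIdx_zero] at h

lemma nextIdx_prevIdx (x : Fin n) : nextIdx (prevIdx x) = x := by
  have := x.pos
  apply Fin.ext
  simp only [nextIdx, prevIdx, Nat.mod_add_mod]
  rw [show x.val + (n - 1) + 1 = x.val + n by omega, Nat.add_mod_right,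
    Nat.mod_eq_of_lt x.isLt]

lemma stepIdx_sub_val (a x : Fin n) : stepIdx a (x - a).val = x := by
  have := x.isLt
  apply Fin.ext
  simp only [stepIdx, Fin.sub_def, Nat.add_mod_mod]
  rw [show a.val + (n - a.val + x.val) = x.val + n by omega, Nat.add_mod_right,
    Nat.mod_eq_of_lt x.isLt]

lemma sub_val_stepIdx (a : Fin n) {q : ℕ} (hq : q < n) : (stepIdx a q - a).val = q := by
  have := a.isLt
  simp only [stepIdx, Fin.sub_def, Nat.add_mod_mod]
  rw [show n - a.val + (a.val + q) = q + n by omega, Nat.add_mod_right, Nat.mod_eq_of_lt hq]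

lemma stepIdx_injOn (a : Fin n) : Set.InjOn (stepIdx a) (Set.Iio n) := fun q hq r hr h => by
  rw [← sub_val_stepIdx a hq, h, sub_val_stepIdx a hr]

lemma isBorderEdge_mk_iff (u v : Fin n) :
    IsBorderEdge s(u, v) ↔ v = nextIdx u ∨ u = nextIdx v := by
  constructor
  · rintro ⟨j, hj⟩
    rcases Sym2.eq_iff.1 hj with ⟨rfl, rfl⟩ | ⟨rfl, rfl⟩ <;> simp
  · rintro (rfl | rfl)
    exacts [⟨u, rfl⟩, ⟨v, Sym2.eq_swap⟩]

end CyclicIndex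

section Sides

variable {n : ℕ}

lemma mem_sideOf_iff (a b x : Fin n) : x ∈ sideOf a b ↔ (x - a).val ≤ (b - a).val := by
  have hxa : x = a ↔ (x - a).val = 0 := by
    constructor
    · intro h; rw [h]; simpa only [stepIdx_zero] using sub_val_stepIdx a a.pos
    · intro h; rw [← stepIdx_sub_val a x, h, stepIdx_zero]
  have hxb : x = b ↔ (x - a).val = (b - a).val := by
    constructor
    · intro h; rw [h]
    · intro h; rw [← stepIdx_sub_val a x, h, stepIdx_sub_val]
  simp only [sideOf, Finset.mem_filter, Finset.mem_univ, true_and]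
  rw [CBtw, hxa, hxb]
  omega

lemma stepIdx_mem_interior_iff (a b : Fin n) {q : ℕ} (hq : q < n) :
    (stepIdx a q ∈ sideOf a b ∧ stepIdx a q ≠ a ∧ stepIdx a q ≠ b) ↔
      1 ≤ q ∧ q < (b - a).val := by
  have hd := (b - a).isLt
  have ha : stepIdx a q = a ↔ q = 0 := by
    rw [← stepIdx_zero a, stepIdx_add, zero_add]
    exact ⟨stepIdx_injOn a hq a.pos, fun h => h ▸ rfl⟩
  have hb : stepIdx a q = b ↔ q = (b - a).val := by
    nth_rw 1 [← stepIdx_sub_val a b]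
    exact ⟨stepIdx_injOn a hq hd, fun h => h ▸ rfl⟩
  rw [mem_sideOf_iff, sub_val_stepIdx a hq, ne_eq, ne_eq, ha, hb]
  omega

end Sides

section BorderPaths

variable {n : ℕ} {T T' : Finset (Sym2 (Fin n))}

lemma IsBorderPathFrom.length_unique {i : Fin n} {m m' : ℕ} (h : IsBorderPathFrom n T i m)
    (h' : IsBorderPathFrom n T i m') : m = m' := by
  by_contra hne
  rcases Nat.lt_or_gt_of_ne hne with hlt | hlt
  exacts [h.2.1 (h'.1 m hlt), h'.2.1 (h.1 m' hlt)]

lemma IsBorderPathFrom.exists_stepIdx_eq_of_isBorderEdge {i w : Fin n} {m t : ℕ}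
    (hP : IsBorderPathFrom n T i m) (hTT' : ∀ e, IsBorderEdge e → e ∈ T' → e ∈ T)
    (ht : t ≤ m) (he : s(stepIdx i t, w) ∈ T') (hb : IsBorderEdge s(stepIdx i t, w)) :
    ∃ t' ≤ m, stepIdx i t' = w := by
  rcases (isBorderEdge_mk_iff _ _).1 hb with rfl | hw
  · rcases ht.lt_or_eq with htm | rfl
    · exact ⟨t + 1, htm, stepIdx_succ i t⟩
    · rw [← stepIdx_succ] at he hb
      exact absurd (hTT' _ hb he) hP.2.1
  · rcases t with _ | t
    · simp only [stepIdx_zero] at he hw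
      obtain rfl : w = prevIdx i := by rw [hw, prevIdx_nextIdx]
      rw [Sym2.eq_swap] at he
      exact absurd (hTT' _ ⟨prevIdx i, by rw [nextIdx_prevIdx]⟩ he) hP.2.2
    · refine ⟨t, by omega, ?_⟩
      rw [← prevIdx_stepIdx_succ, hw, prevIdx_nextIdx]

lemma IsBorderPathFrom.one_le_incChords {i v : Fin n} {m : ℕ}
    (hP : IsBorderPathFrom n T i m) (hTT' : ∀ e, IsBorderEdge e → e ∈ T' → e ∈ T)
    (hconn : (SimpleGraph.fromEdgeSet (T' : Set (Sym2 (Fin n)))).Connected)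
    (hv : ∀ t ≤ m, stepIdx i t ≠ v) : 1 ≤ incChords n T' i m := by
  by_contra! h
  have hborder : ∀ t ≤ m, ∀ w, s(stepIdx i t, w) ∈ T' → IsBorderEdge s(stepIdx i t, w) := by
    intro t ht w he
    by_contra hb
    have hmem : s(stepIdx i t, w) ∈ T'.filter
        (fun e => ¬ IsBorderEdge e ∧ ∃ t ≤ m, stepIdx i t ∈ e) :=
      Finset.mem_filter.2 ⟨he, hb, t, ht, Sym2.mem_mk_left _ _⟩
    exact (Finset.card_pos.2 ⟨_, hmem⟩).ne' (Nat.lt_one_iff.1 h)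
  have hclosed : ∀ u w, u ∈ {x | ∃ t ≤ m, stepIdx i t = x} →
      (SimpleGraph.fromEdgeSet (T' : Set (Sym2 (Fin n)))).Adj u w →
      w ∈ {x | ∃ t ≤ m, stepIdx i t = x} := by
    rintro u w ⟨t, ht, rfl⟩ hadj
    have he : s(stepIdx i t, w) ∈ T' := (SimpleGraph.fromEdgeSet_adj _).1 hadj |>.1
    exact hP.exists_stepIdx_eq_of_isBorderEdge hTT' ht he (hborder t ht w he)
  obtain ⟨t, ht, htv⟩ := hconn.mem_of_forall_adj_mem hclosed ⟨0, Nat.zero_le m, rfl⟩ v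
  exact hv t ht htv

end BorderPaths

section InternalPaths

variable {n : ℕ} {T T' : Finset (Sym2 (Fin n))} {a b : Fin n}

lemma InternalBorderPath.sub_val_bounds {i : Fin n} {m : ℕ}
    (hP : InternalBorderPath n T a b i m) :
    1 ≤ (i - a).val ∧ (i - a).val + m < (b - a).val := by
  have hd := (b - a).isLt
  have hp := (i - a).isLt
  have hstep : ∀ t, stepIdx i t = stepIdx a ((i - a).val + t) := fun t => by
    rw [← stepIdx_add, stepIdx_sub_val]
  have key : ∀ t ≤ m, 1 ≤ (i - a).val + t ∧ (i - a).val + t < (b - a).val := by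
    intro t ht
    induction t with
    | zero => exact (stepIdx_mem_interior_iff a b (by omega)).1 (hstep 0 ▸ hP.2 0 ht)
    | succ t ih =>
      have := ih (by omega)
      exact (stepIdx_mem_interior_iff a b (by omega)).1 (hstep (t + 1) ▸ hP.2 (t + 1) ht)
  have h0 := key 0 (Nat.zero_le m)
  have hm := key m le_rfl
  omega

lemma InternalBorderPath.eq_of_stepIdx_eq {i i' : Fin n} {m m' t t' : ℕ}
    (hP : InternalBorderPath n T a b i m) (hP' : InternalBorderPath n T a b i' m')
    (ht : t ≤ m) (ht' : t' ≤ m') (h : stepIdx i t = stepIdx i' t') : i = i' := by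
  wlog hle : (i - a).val ≤ (i' - a).val generalizing i i' m m' t t'
  · exact (this hP' hP ht' ht h.symm (by omega)).symm
  have hd := (b - a).isLt
  obtain ⟨-, h2⟩ := hP.sub_val_bounds
  obtain ⟨-, h2'⟩ := hP'.sub_val_bounds
  have hpos : (i - a).val + t = (i' - a).val + t' := by
    apply stepIdx_injOn a (Set.mem_Iio.2 (by omega)) (Set.mem_Iio.2 (by omega))
    rw [← stepIdx_add, ← stepIdx_add, stepIdx_sub_val, stepIdx_sub_val, h]
  rcases hle.lt_or_eq with hlt | heq
  · obtain ⟨k, hk⟩ : ∃ k, (i' - a).val = (i - a).val + (k + 1) :=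
      ⟨(i' - a).val - (i - a).val - 1, by omega⟩
    have hi' : i' = stepIdx i (k + 1) := by
      rw [← stepIdx_sub_val a i', hk, ← stepIdx_add, stepIdx_sub_val]
    have hprev := hP'.1.2.2
    rw [hi', prevIdx_stepIdx_succ] at hprev
    exact absurd (hP.1.1 k (by omega)) hprev
  · rw [← stepIdx_sub_val a i, heq, stepIdx_sub_val]

lemma exists_internalBorderPath_of_lt {q q' : ℕ} (hqq' : q < q') (hq' : q' < (b - a).val)
    (hq : s(stepIdx a q, stepIdx a (q + 1)) ∉ T)
    (hq'T : s(stepIdx a q', stepIdx a (q' + 1)) ∉ T) :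
    ∃ m, InternalBorderPath n T a b (stepIdx a (q + 1)) m := by
  have hd := (b - a).isLt
  have hex : ∃ r, q < r ∧ s(stepIdx a r, stepIdx a (r + 1)) ∉ T := ⟨q', hqq', hq'T⟩
  obtain ⟨hqr, hr⟩ := Nat.find_spec hex
  have hle : Nat.find hex ≤ q' := Nat.find_min' hex ⟨hqq', hq'T⟩
  refine ⟨Nat.find hex - q - 1, ⟨⟨fun t ht => ?_, ?_, ?_⟩, fun t ht => ?_⟩⟩
  · have hmin := Nat.find_min hex (show q + 1 + t < Nat.find hex by omega)
    rw [not_and, not_not] at hmin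
    rw [stepIdx_add, stepIdx_add, show q + 1 + (t + 1) = q + 1 + t + 1 by omega]
    exact hmin (by omega)
  · rwa [stepIdx_add, stepIdx_add, show q + 1 + (Nat.find hex - q - 1) = Nat.find hex by omega,
      show q + 1 + (Nat.find hex - q - 1 + 1) = Nat.find hex + 1 by omega]
  · rwa [prevIdx_stepIdx_succ]
  · rw [stepIdx_add]
    exact (stepIdx_mem_interior_iff a b (by omega)).2 ⟨by omega, by omega⟩

lemma sub_val_lt_of_mem_holesIn {h : Fin n} (hab : ¬ IsBorderEdge s(a, b))
    (hh : h ∈ holesIn n T (sideOf a b)) :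
    (h - a).val < (b - a).val ∧ s(stepIdx a (h - a).val, stepIdx a ((h - a).val + 1)) ∉ T := by
  simp only [holesIn, Finset.mem_filter, Finset.mem_univ, true_and] at hh
  obtain ⟨hT, hA, hnA⟩ := hh
  rw [stepIdx_succ, stepIdx_sub_val]
  refine ⟨?_, hT⟩
  rcases ((mem_sideOf_iff a b h).1 hA).lt_or_eq with hlt | heq
  · exact hlt
  have hb : h = b := by rw [← stepIdx_sub_val a h, heq, stepIdx_sub_val]
  have hnext : nextIdx b = stepIdx a ((b - a).val + 1) := by rw [stepIdx_succ, stepIdx_sub_val]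
  rw [hb, mem_sideOf_iff, hnext] at hnA
  by_cases hlast : (b - a).val + 1 < n
  · rw [sub_val_stepIdx a hlast] at hnA
    omega
  · have hba : nextIdx b = a := by
      rw [hnext, show (b - a).val + 1 = n by omega, stepIdx_self]
    exact absurd ⟨b, by rw [hba, Sym2.eq_swap]⟩ hab

end InternalPaths

section Counting

variable {n : ℕ} {T T' : Finset (Sym2 (Fin n))} {a b : Fin n}

def internalStarts (n : ℕ) (T : Finset (Sym2 (Fin n))) (a b : Fin n) : Finset (Fin n) :=
  univ.filter fun i => ∃ m, InternalBorderPath n T a b i m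

lemma card_holesIn_le_card_internalStarts_add_one (hab : ¬ IsBorderEdge s(a, b)) :
    (holesIn n T (sideOf a b)).card ≤ (internalStarts n T a b).card + 1 := by
  set H := holesIn n T (sideOf a b)
  set S := internalStarts n T a b
  have hfollowed : ∀ h ∈ H, ∀ h' ∈ H, (h - a).val < (h' - a).val → nextIdx h ∈ S := by
    intro h hh h' hh' hlt
    obtain ⟨-, hT⟩ := sub_val_lt_of_mem_holesIn hab hh
    obtain ⟨hlt', hT'⟩ := sub_val_lt_of_mem_holesIn hab hh'
    obtain ⟨m, hm⟩ := exists_internalBorderPath_of_lt hlt hlt' hT hT'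
    rw [stepIdx_succ, stepIdx_sub_val] at hm
    exact Finset.mem_filter.2 ⟨Finset.mem_univ _, m, hm⟩
  have hin : (H.filter (nextIdx · ∈ S)).card ≤ S.card :=
    Finset.card_le_card_of_injOn nextIdx (fun h hh => (Finset.mem_filter.1 hh).2)
      (fun h _ h' _ he => by rw [← prevIdx_nextIdx h, he, prevIdx_nextIdx])
  have hout : (H.filter (nextIdx · ∉ S)).card ≤ 1 := by
    rw [Finset.card_le_one]
    intro h hh h' hh'
    rw [Finset.mem_filter] at hh hh'
    rcases lt_trichotomy (h - a).val (h' - a).val with hlt | heq | hlt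
    · exact absurd (hfollowed h hh.1 h' hh'.1 hlt) hh.2
    · rw [← stepIdx_sub_val a h, heq, stepIdx_sub_val]
    · exact absurd (hfollowed h' hh'.1 h hh.1 hlt) hh'.2
  have := Finset.card_filter_add_card_filter_not (s := H) (nextIdx · ∈ S)
  omega

def chordEnds (n : ℕ) (T' : Finset (Sym2 (Fin n))) (i : Fin n) (m : ℕ) :
    Finset (Fin n × Fin n) :=
  univ.filter fun p => s(p.1, p.2) ∈ T' ∧ ¬ IsBorderEdge s(p.1, p.2) ∧ ∃ t ≤ m, stepIdx i t = p.1

lemma incChords_le_card_chordEnds {i : Fin n} {m : ℕ} :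
    incChords n T' i m ≤ (chordEnds n T' i m).card := by
  apply Finset.card_le_card_of_surjOn (fun p => s(p.1, p.2))
  intro e he
  obtain ⟨heT, hb, t, ht, hte⟩ := Finset.mem_filter.1 he
  obtain ⟨w, rfl⟩ := Sym2.mem_iff_exists.1 hte
  exact ⟨(stepIdx i t, w), Finset.mem_filter.2 ⟨Finset.mem_univ _, heT, hb, t, ht, rfl⟩, rfl⟩

lemma sum_incChords_le_sideDegree (S : Finset (Fin n)) (len : Fin n → ℕ)
    (hS : ∀ i ∈ S, InternalBorderPath n T a b i (len i)) :
    ∑ i ∈ S, incChords n T' i (len i) ≤ sideDegree n a b T' := by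
  have hdisj : (S : Set (Fin n)).PairwiseDisjoint fun i => chordEnds n T' i (len i) := by
    intro i hi j hj hij
    rw [Function.onFun, Finset.disjoint_left]
    intro p hpi hpj
    obtain ⟨-, -, -, t, ht, hti⟩ := Finset.mem_filter.1 hpi
    obtain ⟨-, -, -, t', ht', htj⟩ := Finset.mem_filter.1 hpj
    exact hij ((hS i hi).eq_of_stepIdx_eq (hS j hj) ht ht' (hti.trans htj.symm))
  calc ∑ i ∈ S, incChords n T' i (len i)
      ≤ ∑ i ∈ S, (chordEnds n T' i (len i)).card :=
        Finset.sum_le_sum fun i _ => incChords_le_card_chordEnds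
    _ = (S.biUnion fun i => chordEnds n T' i (len i)).card := (Finset.card_biUnion hdisj).symm
    _ ≤ sideDegree n a b T' := by
      apply Finset.card_le_card
      intro p hp
      obtain ⟨i, hi, hp⟩ := Finset.mem_biUnion.1 hp
      obtain ⟨-, heT, hb, t, ht, hpt⟩ := Finset.mem_filter.1 hp
      obtain ⟨hA, ha, hb'⟩ := hpt ▸ (hS i hi).2 t ht
      exact Finset.mem_filter.2 ⟨Finset.mem_univ _, heT, hb, hA, Or.inl ⟨ha, hb'⟩⟩

end Counting

/-- In a very good side `A` of a nice pair: every internal border path of `A`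
is incident to at least one chord of `T₂`, and at most one internal border
path of `A` is incident to two chords of `T₂`. -/
theorem internal_border_paths_of_very_good_side (n : ℕ)
    (T₁ T₂ : Finset (Sym2 (Fin n))) (hnice : NicePair n T₁ T₂)
    (a b : Fin n) (hvg : VeryGoodSide n T₁ T₂ a b) :
    (∀ i m, InternalBorderPath n T₁ a b i m → 1 ≤ incChords n T₂ i m) ∧
    (∀ i m i' m', InternalBorderPath n T₁ a b i m →
      InternalBorderPath n T₁ a b i' m' →
      2 ≤ incChords n T₂ i m → 2 ≤ incChords n T₂ i' m' → i = i') := by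
  have hone : ∀ i m, InternalBorderPath n T₁ a b i m → 1 ≤ incChords n T₂ i m :=
    fun i m hP => hP.1.one_le_incChords (fun e he => (hnice.2.2.1 e he).2) hnice.2.1.2.2.1
      fun t ht => (hP.2 t ht).2.1
  refine ⟨hone, fun i m i' m' hP hP' h2 h2' => ?_⟩
  by_contra hne
  have hholes := card_holesIn_le_card_internalStarts_add_one (T := T₁) hvg.1.2.1
  set S := internalStarts n T₁ a b
  have hS : ∀ j ∈ S, ∃ l, InternalBorderPath n T₁ a b j l := fun j hj => (Finset.mem_filter.1 hj).2
  choose! len hlen using hS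
  have hi : i ∈ S := Finset.mem_filter.2 ⟨Finset.mem_univ _, m, hP⟩
  have hi' : i' ∈ S := Finset.mem_filter.2 ⟨Finset.mem_univ _, m', hP'⟩
  have hsum : S.card + 2 ≤ ∑ j ∈ S, incChords n T₂ j (len j) :=
    card_add_two_le_sum (fun j hj => hone j _ (hlen j hj)) hi hi' hne
      (by rwa [(hlen i hi).1.length_unique hP.1]) (by rwa [(hlen i' hi').1.length_unique hP'.1])
  have hdeg := sum_incChords_le_sideDegree (T' := T₂) S len hlen
  have hvg_deg := hvg.2
  omega
end
end
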